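/- arXiv:1904.11484 — 5 statements merged into one kernel-verified Lean document; each statement's English description precedes it below -/
import Mathlib

section
/- For every integer n ∈ ℤ and every x ∈ [−1,1], one has the recursion (n+2)·I_{n+1}(x) = (2n+1)·x·I_n(x) − (n−1)·I_{n−1}(x). -/
/-- The Legendre polynomial of degree `n` on `[-1,1]`, via Rodrigues' formula. -/
noncomputable def legP (n : ℕ) (x : ℝ) : ℝ :=
  (1 / (2 ^ n * n.factorial)) * iteratedDeriv n (fun y : ℝ => (y ^ 2 - 1) ^ n) x

/-- The complex-valued extension of the Legendre polynomials to integer degrees,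
with `P_{-n-1}(x) = i * P_n(x)` for `n ∈ ℕ`. -/
noncomputable def legPZ (n : ℤ) (x : ℝ) : ℂ :=
  if 0 ≤ n then (legP n.toNat x : ℂ) else Complex.I * (legP (-n - 1).toNat x : ℂ)

/-- The complex-valued polynomial `I_n` defined by `(2n+1) I_n(x) = P_{n+1}(x) - P_{n-1}(x)`. -/
noncomputable def legI (n : ℤ) (x : ℝ) : ℂ :=
  (legPZ (n + 1) x - legPZ (n - 1) x) / (2 * (n : ℂ) + 1)


open Polynomial

noncomputable def fP (n : ℕ) : Polynomial ℝ := ((X : Polynomial ℝ)^2 - 1)^n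

lemma iter_deriv_eval (p : Polynomial ℝ) (n : ℕ) (x : ℝ) :
    iteratedDeriv n (fun y : ℝ => p.eval y) x = (derivative^[n] p).eval x := by
  induction n generalizing p x with
  | zero => simp
  | succ n ih =>
    rw [iteratedDeriv_succ']
    have h : (deriv fun y : ℝ => p.eval y) = (fun y : ℝ => (derivative p).eval y) := by
      funext y; simp
    rw [h, ih, Function.iterate_succ_apply]

lemma iter_deriv_add (k : ℕ) (p q : Polynomial ℝ) :
    derivative^[k] (p + q) = derivative^[k] p + derivative^[k] q := by
  induction k generalizing p q with
  | zero => simp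
  | succ k ih => simp [Function.iterate_succ_apply, ih]

lemma iter_X_mul (k : ℕ) (p : Polynomial ℝ) :
    derivative^[k+1] (X * p) =
      X * derivative^[k+1] p + ((k : Polynomial ℝ) + 1) * derivative^[k] p := by
  induction k generalizing p with
  | zero => simp [derivative_mul]; ring
  | succ k ih =>
    have h1 : derivative^[k+1+1] (X*p) = derivative^[k+1] (p + X * derivative p) := by
      rw [Function.iterate_succ_apply]; congr 1; simp [derivative_mul]
    rw [h1, iter_deriv_add, ih (derivative p),
      ← Function.iterate_succ_apply derivative (k+1) p,
      ← Function.iterate_succ_apply derivative k p]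
    push_cast; ring

lemma iter_deriv_cmul (k : ℕ) (c p : Polynomial ℝ) (hc : derivative c = 0) :
    derivative^[k] (c * p) = c * derivative^[k] p := by
  induction k generalizing p with
  | zero => simp
  | succ k ih =>
    rw [Function.iterate_succ_apply, derivative_mul, hc, zero_mul, zero_add,
      Function.iterate_succ_apply, ih]

lemma DfP (n : ℕ) : derivative (fP (n+1)) = 2*((n:Polynomial ℝ)+1) * (X * fP n) := by
  unfold fP
  rw [derivative_pow_succ]
  simp only [derivative_sub, derivative_one, derivative_X_pow]
  push_cast
  ring_nf
  simp only [map_ofNat, map_add, C_1, C_eq_natCast]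
  ring

lemma L2b (m : ℕ) : ((X:Polynomial ℝ)^2 - 1) * derivative (fP m) = 2*(m:Polynomial ℝ)*X*(fP m) := by
  cases m with
  | zero => simp [fP]
  | succ n => rw [DfP]; unfold fP; push_cast; ring

lemma key (m k : ℕ) :
    ((X:Polynomial ℝ)^2 - 1) * derivative (derivative (derivative^[k] (fP m)))
      = 2*((m:Polynomial ℝ)-(k:Polynomial ℝ)-1)*X*(derivative (derivative^[k] (fP m)))
        + ((k:Polynomial ℝ)+1)*(2*(m:Polynomial ℝ)-(k:Polynomial ℝ))*(derivative^[k] (fP m)) := by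
  induction k with
  | zero =>
    have h := congrArg derivative (L2b m)
    simp only [derivative_mul, derivative_sub, derivative_one, derivative_X, derivative_X_pow,
      derivative_natCast, derivative_ofNat, map_ofNat, pow_one, C_eq_natCast, Nat.cast_ofNat] at h
    simp only [Function.iterate_zero_apply]
    push_cast
    linear_combination h
  | succ k ih =>
    rw [Function.iterate_succ_apply']
    have h := congrArg derivative ih
    simp only [derivative_mul, derivative_add, derivative_sub, derivative_one, derivative_X,
      derivative_X_pow, derivative_natCast, derivative_ofNat, map_ofNat, pow_one, C_eq_natCast, Nat.cast_ofNat] at h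
    push_cast
    linear_combination h

lemma keyODE (n : ℕ) :
    ((X:Polynomial ℝ)^2 - 1) * derivative (derivative (derivative^[n] (fP (n+1))))
      = ((n:Polynomial ℝ)+1)*((n:Polynomial ℝ)+2) * derivative^[n] (fP (n+1)) := by
  have h := key (n+1) n
  push_cast at h
  linear_combination h

lemma it1 (k : ℕ) (p : Polynomial ℝ) :
    derivative^[k+1] p = derivative (derivative^[k] p) := Function.iterate_succ_apply' _ _ _

lemma Dn (m : ℕ) :
    derivative^[m+1] (fP (m+1))
      = 2*((X:Polynomial ℝ)^2-1)*derivative^[m+1] (fP m)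
        + 2*((m:Polynomial ℝ)+1)*X*derivative^[m] (fP m) := by
  cases m with
  | zero =>
    simp only [fP, pow_one, pow_zero, Function.iterate_one, Function.iterate_zero_apply]
    simp [derivative_sub, derivative_X_pow, map_ofNat]
    norm_num
  | succ n =>
    have hc : derivative (2*((n:Polynomial ℝ)+2)) = 0 := by
      simp [derivative_natCast]
    have h1 : derivative (fP (n+1+1)) = 2*((n:Polynomial ℝ)+2) * (X * fP (n+1)) := by
      have h := DfP (n+1); push_cast at h; linear_combination h
    have h2 : derivative^[n+1+1] (fP (n+1+1))
        = 2*((n:Polynomial ℝ)+2) * (X * derivative^[n+1] (fP (n+1))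
            + ((n:Polynomial ℝ)+1)*derivative^[n] (fP (n+1))) := by
      rw [Function.iterate_succ_apply, h1, iter_deriv_cmul _ _ _ hc, iter_X_mul]
    rw [h2]
    have h3 := keyODE n
    push_cast
    simp only [it1]
    linear_combination (-2:Polynomial ℝ)*h3

lemma En (m : ℕ) :
    derivative^[m+1+1] (fP (m+1))
      = 2*((m:Polynomial ℝ)+1)*X*derivative^[m+1] (fP m)
        + 2*((m:Polynomial ℝ)+1)^2 * derivative^[m] (fP m) := by
  have hc : derivative (2*((m:Polynomial ℝ)+1)) = 0 := by simp [derivative_natCast]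
  have h2 : derivative^[m+1+1] (fP (m+1))
      = 2*((m:Polynomial ℝ)+1) * (X * derivative^[m+1] (fP m)
          + ((m:Polynomial ℝ)+1)*derivative^[m] (fP m)) := by
    rw [Function.iterate_succ_apply, DfP, iter_deriv_cmul _ _ _ hc, iter_X_mul]
  rw [h2]; ring

lemma Fn (m : ℕ) :
    ((X:Polynomial ℝ)^2-1) * derivative^[m+1+1] (fP (m+1))
      = ((m:Polynomial ℝ)+1)*X*derivative^[m+1] (fP (m+1))
        - 2*((m:Polynomial ℝ)+1)^2 * derivative^[m] (fP m) := by
  linear_combination ((X:Polynomial ℝ)^2-1)*En m - ((m:Polynomial ℝ)+1)*X*Dn m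

lemma QBonnet (m : ℕ) :
    derivative^[m+1+1] (fP (m+1+1))
      = 2*(2*(m:Polynomial ℝ)+3)*X*derivative^[m+1] (fP (m+1))
        - 4*((m:Polynomial ℝ)+1)^2*derivative^[m] (fP m) := by
  have hD := Dn (m+1)
  push_cast at hD
  linear_combination hD + 2*Fn m

lemma legP_eval (k : ℕ) (x : ℝ) :
    (2^k * (k.factorial : ℝ)) * legP k x = (derivative^[k] (fP k)).eval x := by
  unfold legP
  rw [show (fun y : ℝ => (y^2-1)^k) = fun y => (fP k).eval y from by funext y; simp [fP]]
  rw [iter_deriv_eval]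
  have h : (2:ℝ)^k * k.factorial ≠ 0 := by positivity
  field_simp

lemma legP_zero (x : ℝ) : legP 0 x = 1 := by simp [legP]

lemma legP_one (x : ℝ) : legP 1 x = x := by
  have h := legP_eval 1 x
  simp [fP, derivative_sub, derivative_X_pow, map_ofNat] at h
  linarith

lemma bonnetN (m : ℕ) (x : ℝ) :
    ((m:ℝ)+2) * legP (m+2) x = (2*(m:ℝ)+3)*x*legP (m+1) x - ((m:ℝ)+1)*legP m x := by
  have hQ' : derivative^[m+2] (fP (m+2))
      = 2*(2*(m:Polynomial ℝ)+3)*X*derivative^[m+1] (fP (m+1))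
        - 4*((m:Polynomial ℝ)+1)^2*derivative^[m] (fP m) := QBonnet m
  have hQ := congrArg (Polynomial.eval x) hQ'
  simp only [eval_mul, eval_add, eval_sub, eval_pow, eval_X, eval_ofNat, eval_natCast,
    eval_one] at hQ
  rw [← legP_eval, ← legP_eval, ← legP_eval] at hQ
  have f2 : (((m+2).factorial : ℕ) : ℝ) = ((m:ℝ)+2)*((m:ℝ)+1)*(m.factorial : ℝ) := by
    rw [show m+2 = (m+1)+1 from rfl, Nat.factorial_succ, Nat.factorial_succ]
    push_cast; ring
  have f1 : (((m+1).factorial : ℕ) : ℝ) = ((m:ℝ)+1)*(m.factorial : ℝ) := by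
    rw [Nat.factorial_succ]; push_cast; ring
  rw [f1, f2] at hQ
  have hc : ((2:ℝ)^(m+2) * (((m:ℝ)+1) * (m.factorial : ℝ))) ≠ 0 := by positivity
  refine mul_left_cancel₀ hc ?_
  ring_nf
  ring_nf at hQ
  linear_combination hQ

lemma legPZ_ofNat (m : ℕ) (x : ℝ) : legPZ (m : ℤ) x = (legP m x : ℂ) := by
  simp [legPZ]

lemma legPZ_neg (m : ℕ) (x : ℝ) : legPZ (-(m+1) : ℤ) x = Complex.I * (legP m x : ℂ) := by
  have h : ¬ (0:ℤ) ≤ -((m:ℤ)+1) := by omega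
  simp only [legPZ, if_neg h]
  norm_num

lemma bonnetNC (m : ℕ) (x : ℝ) :
    ((m:ℂ)+2) * (legP (m+2) x : ℂ)
      = (2*(m:ℂ)+3)*(x:ℂ)*(legP (m+1) x : ℂ) - ((m:ℂ)+1)*(legP m x : ℂ) := by
  exact_mod_cast congrArg (Complex.ofReal) (bonnetN m x)

lemma bonnetZ (m : ℤ) (x : ℝ) :
    ((m:ℂ)+1) * legPZ (m+1) x = (2*(m:ℂ)+1)*(x:ℂ)*legPZ m x - (m:ℂ)*legPZ (m-1) x := by
  cases m with
  | ofNat k =>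
    simp only [Int.ofNat_eq_natCast]
    cases k with
    | zero =>
      norm_num [legPZ, legP_one, legP_zero]
    | succ j =>
      rw [show ((((j:ℕ)+1:ℕ)):ℤ) + 1 = (((j+2:ℕ)):ℤ) from by push_cast; ring,
        show ((((j:ℕ)+1:ℕ)):ℤ) - 1 = (((j:ℕ)):ℤ) from by push_cast; ring,
        legPZ_ofNat, legPZ_ofNat, legPZ_ofNat]
      push_cast
      linear_combination bonnetNC j x
  | negSucc k =>
    rw [Int.negSucc_eq]
    cases k with
    | zero =>
      norm_num [legPZ, legP_one, legP_zero]
      ring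
    | succ j =>
      rw [show (-((((j+1:ℕ)):ℤ)+1))+1 = -((((j:ℕ)):ℤ)+1) from by push_cast; ring,
        show (-((((j+1:ℕ)):ℤ)+1))-1 = -((((j+2:ℕ)):ℤ)+1) from by push_cast; ring,
        show (-((((j+1:ℕ)):ℤ)+1)) = -((((j+1:ℕ)):ℤ)+1) from rfl,
        legPZ_neg, legPZ_neg, legPZ_neg]
      push_cast
      linear_combination (-Complex.I) * bonnetNC j x

lemma two_mul_add_one_ne (m : ℤ) : (2*(m:ℂ)+1) ≠ 0 := by
  intro h
  have h2 : ((2*m+1 : ℤ) : ℂ) = 0 := by push_cast; linear_combination h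
  have h3 : (2*m+1 : ℤ) = 0 := by exact_mod_cast h2
  omega

theorem statement_3 (n : ℤ) (x : ℝ) (hx : x ∈ Set.Icc (-1 : ℝ) 1) :
    ((n : ℂ) + 2) * legI (n + 1) x
      = (2 * (n : ℂ) + 1) * (x : ℂ) * legI n x - ((n : ℂ) - 1) * legI (n - 1) x := by
  have B1 := bonnetZ (n+1) x
  have B3 := bonnetZ (n-1) x
  have h1 := two_mul_add_one_ne (n+1)
  have h2 := two_mul_add_one_ne n
  have h3 := two_mul_add_one_ne (n-1)
  unfold legI
  simp only [show (n:ℤ)+1-1 = n from by ring, show (n:ℤ)-1+1 = n from by ring] at B1 B3 ⊢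
  push_cast at B1 B3 h1 h2 h3 ⊢
  have h2' : (n:ℂ)*2+1 ≠ 0 := by rwa [mul_comm] at h2
  field_simp
  linear_combination ((2*(n:ℂ)-1)) * B1 - ((2*(n:ℂ)+3)) * B3
end

section
/- Fix N ∈ ℕ and let V be the N×N real matrix with entries V_{kl} = (−1)^{l−1}/(k+l−1)! for k, l ∈ {1,…,N}. Then V is invertible, and its inverse W = V^{−1} has entries W_{kl} = (−1)^{N+l}·(k−1)!·l!·binom(N−1, k−1)·binom(N+l−1, l)·Σ_{m=0}^{k−1} binom(N−k+m, l−1)·binom(N+m−1, m), where binom(a,b) denotes the binomial coefficient (equal to 0 when b > a). -/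
open Finset

lemma lemA (M : ℕ) (s : ℕ) :
    ∑ j ∈ range (s+1), (-1:ℤ)^j * ((M+1).choose (s - j)) = M.choose s := by
  induction s with
  | zero => simp
  | succ s ih =>
    rw [Finset.sum_range_succ']
    have h : ∀ j, (-1:ℤ)^(j+1) * (((M+1).choose (s+1-(j+1))) : ℤ)
        = -((-1:ℤ)^j * ((M+1).choose (s - j))) := by
      intro j
      have e : s + 1 - (j+1) = s - j := by omega
      rw [e, pow_succ]; ring
    simp only [h]
    rw [Finset.sum_neg_distrib, ih]
    simp [Nat.choose_succ_succ' M s]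

lemma lemHS (N : ℕ) (m : ℕ) : ∑ i ∈ range (m+1), (N+i).choose i = (N+1+m).choose m := by
  induction m with
  | zero => simp
  | succ m ih =>
    rw [Finset.sum_range_succ, ih]
    have e : N+1+(m+1) = (N+1+m)+1 := by omega
    rw [e, Nat.choose_succ_succ' (N+1+m) m]
    have e2 : N + (m+1) = N+1+m := by omega
    rw [e2]

lemma lemF (k r : ℕ) (N : ℕ) :
    ∑ m ∈ range (r+1), (-1:ℤ)^m * ((N+m).choose m) * ((k+N+1).choose (r-m)) = k.choose r := by
  induction N with
  | zero =>
    have := lemA k r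
    calc ∑ m ∈ range (r+1), (-1:ℤ)^m * ((0+m).choose m) * ((k+0+1).choose (r-m))
        = ∑ m ∈ range (r+1), (-1:ℤ)^m * ((k+1).choose (r-m)) := by
          refine Finset.sum_congr rfl fun m _ => ?_
          rw [Nat.zero_add, Nat.choose_self]
          push_cast; ring
      _ = _ := this
  | succ N ih =>
    have step1 : ∀ m : ℕ, (((N+1+m).choose m : ℕ) : ℤ) = ∑ i ∈ range (m+1), (((N+i).choose i : ℕ) : ℤ) := by
      intro m; rw [← lemHS N m]; push_cast; ring
    calc ∑ m ∈ range (r+1), (-1:ℤ)^m * ((N+1+m).choose m) * ((k+(N+1)+1).choose (r-m))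
        = ∑ m ∈ range (r+1), ∑ i ∈ range (m+1),
            ((N+i).choose i : ℤ) * ((-1)^m * ((k+N+2).choose (r-m))) := by
          refine Finset.sum_congr rfl fun m _ => ?_
          have e : k+(N+1)+1 = k+N+2 := by omega
          rw [e, step1 m, show ((-1:ℤ)^m * (∑ i ∈ range (m+1), (((N+i).choose i : ℕ) : ℤ)) * ((k+N+2).choose (r-m)))
            = (∑ i ∈ range (m+1), (((N+i).choose i : ℕ) : ℤ)) * ((-1)^m * ((k+N+2).choose (r-m))) from by ring,
            Finset.sum_mul]
      _ = ∑ i ∈ range (r+1), ∑ m ∈ Finset.Ico i (r+1),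
            ((N+i).choose i : ℤ) * ((-1)^m * ((k+N+2).choose (r-m))) := by
          simp only [Finset.range_eq_Ico]
          exact (Finset.sum_Ico_Ico_comm 0 (r+1) fun i m =>
            ((N+i).choose i : ℤ) * ((-1)^m * ((k+N+2).choose (r-m)))).symm
      _ = ∑ i ∈ range (r+1), (-1:ℤ)^i * ((N+i).choose i) * ((k+N+1).choose (r-i)) := by
          refine Finset.sum_congr rfl fun i hi => ?_
          have hi' : i ≤ r := by simp at hi; omega
          rw [Finset.sum_Ico_eq_sum_range]
          have e1 : r + 1 - i = (r-i)+1 := by omega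
          rw [e1]
          have e2 : ∀ t, ((N+i).choose i : ℤ) * ((-1)^(i+t) * ((k+N+2).choose (r-(i+t))))
              = ((N+i).choose i : ℤ) * (-1)^i * ((-1)^t * (((k+N+1)+1).choose ((r-i)-t))) := by
            intro t
            have e3 : r - (i+t) = (r-i) - t := by omega
            have e4 : k+N+2 = (k+N+1)+1 := by omega
            rw [e3, e4, pow_add]; ring
          simp only [e2]
          rw [← Finset.mul_sum, lemA (k+N+1) (r-i)]
          ring
      _ = k.choose r := ih

lemma lemO (N k l : ℕ) (hk : k < N) :
    ∑ r ∈ range N, (-1:ℤ)^r * (k.choose r) * (r.choose l) = (-1)^k * (if k = l then 1 else 0) := by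
  have hsub : ∑ r ∈ range N, (-1:ℤ)^r * (k.choose r) * (r.choose l)
      = ∑ r ∈ range (k+1), (-1:ℤ)^r * (k.choose r) * (r.choose l) := by
    refine (Finset.sum_subset (Finset.range_subset_range.mpr hk) fun r _ hr => ?_).symm
    have : k < r := by simp at hr; omega
    rw [Nat.choose_eq_zero_of_lt this]; simp
  rw [hsub]
  by_cases hlk : l ≤ k
  · have hsplit : ∑ r ∈ range (k+1), (-1:ℤ)^r * (k.choose r) * (r.choose l)
        = ∑ r ∈ Finset.Ico l (k+1), (-1:ℤ)^r * (k.choose r) * (r.choose l) := by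
      rw [Finset.range_eq_Ico, ← Finset.sum_Ico_consecutive _ (Nat.zero_le l) (by omega)]
      have : ∑ r ∈ Finset.Ico 0 l, (-1:ℤ)^r * (k.choose r) * (r.choose l) = 0 := by
        refine Finset.sum_eq_zero fun r hr => ?_
        have : r < l := by simp at hr; omega
        rw [Nat.choose_eq_zero_of_lt this]; simp
      rw [this, zero_add]
    rw [hsplit, Finset.sum_Ico_eq_sum_range]
    have e1 : k + 1 - l = (k-l)+1 := by omega
    rw [e1]
    have e2 : ∀ t ∈ range ((k-l)+1), (-1:ℤ)^(l+t) * (k.choose (l+t)) * ((l+t).choose l)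
        = ((k.choose l : ℤ) * (-1)^l) * ((-1)^t * ((k-l).choose t)) := by
      intro t ht
      have ht' : t ≤ k - l := by simp at ht; omega
      have h1 : k.choose (l+t) * (l+t).choose l = k.choose l * (k-l).choose (l+t-l) :=
        Nat.choose_mul (by omega)
      have h2 : l + t - l = t := by omega
      rw [h2] at h1
      have h1' : ((k.choose (l+t) : ℕ) : ℤ) * ((l+t).choose l) = (k.choose l : ℤ) * ((k-l).choose t) := by
        exact_mod_cast congrArg (fun x : ℕ => (x : ℤ)) h1
      rw [pow_add]
      calc (-1:ℤ)^l * (-1)^t * (k.choose (l+t)) * ((l+t).choose l)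
          = (-1:ℤ)^l * (-1)^t * ((k.choose (l+t) : ℤ) * ((l+t).choose l)) := by ring
        _ = (-1:ℤ)^l * (-1)^t * ((k.choose l : ℤ) * ((k-l).choose t)) := by rw [h1']
        _ = ((k.choose l : ℤ) * (-1)^l) * ((-1)^t * ((k-l).choose t)) := by ring
    rw [Finset.sum_congr rfl e2, ← Finset.mul_sum, Int.alternating_sum_range_choose]
    by_cases hkl : k = l
    · subst hkl; simp
    · have : k - l ≠ 0 := by omega
      simp [this, hkl]
  · have : ∀ r ∈ range (k+1), (-1:ℤ)^r * (k.choose r) * (r.choose l) = 0 := by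
      intro r hr
      have : r < l := by simp at hr; omega
      rw [Nat.choose_eq_zero_of_lt this]; simp
    rw [Finset.sum_congr rfl this]
    have : k ≠ l := by omega
    simp [this]

lemma helperFilter (N a : ℕ) (g : ℕ → ℝ) :
    ∑ i ∈ range (N - a), g i = ∑ i ∈ range N, if i + a < N then g i else 0 := by
  rw [← Finset.sum_filter]
  refine Finset.sum_congr ?_ fun x _ => rfl
  ext x; simp; omega

lemma lemSwap (N : ℕ) (f : ℕ → ℕ → ℝ) :
    ∑ m ∈ range N, ∑ i ∈ range (N-m), f i m = ∑ i ∈ range N, ∑ m ∈ range (N-i), f i m := by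
  calc ∑ m ∈ range N, ∑ i ∈ range (N-m), f i m
      = ∑ m ∈ range N, ∑ i ∈ range N, if i + m < N then f i m else 0 :=
        Finset.sum_congr rfl fun m _ => helperFilter N m _
    _ = ∑ i ∈ range N, ∑ m ∈ range N, if i + m < N then f i m else 0 := Finset.sum_comm
    _ = ∑ i ∈ range N, ∑ m ∈ range (N-i), f i m := by
        refine Finset.sum_congr rfl fun i _ => ?_
        rw [helperFilter N i (fun m => f i m)]
        exact Finset.sum_congr rfl fun m _ => by rw [Nat.add_comm m i]

lemma negpow (a b : ℕ) (h : a % 2 = b % 2) : (-1:ℝ)^a = (-1:ℝ)^b := by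
  conv_lhs => rw [← Nat.div_add_mod a 2]
  conv_rhs => rw [← Nat.div_add_mod b 2]
  rw [h, pow_add, pow_add, pow_mul, pow_mul]
  norm_num

lemma lemInner (N K r : ℕ) (hN : 0 < N) (hr : r < N) :
    ∑ m ∈ range (r+1), (-1:ℝ)^m * ((N-1+m).choose m) / ((r-m).factorial * (K+N-r+m).factorial)
      = (K.choose r) / (K+N).factorial := by
  have key := lemF K r (N-1)
  have hKN : K + (N-1) + 1 = K + N := by omega
  rw [hKN] at key
  have hterm : ∀ m ∈ range (r+1),
      (-1:ℝ)^m * ((N-1+m).choose m) / ((r-m).factorial * (K+N-r+m).factorial)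
      = ((-1:ℝ)^m * ((N-1+m).choose m) * ((K+N).choose (r-m))) / (K+N).factorial := by
    intro m hm
    have hm' : m ≤ r := by simp at hm; omega
    have h2 : (K+N).choose (r-m) * (r-m).factorial * ((K+N) - (r-m)).factorial = (K+N).factorial :=
      Nat.choose_mul_factorial_mul_factorial (by omega)
    have h3 : (K+N) - (r-m) = K+N-r+m := by omega
    rw [h3] at h2
    have h2c : ((K+N).factorial : ℝ)
        = ((K+N).choose (r-m) : ℝ) * ((r-m).factorial : ℝ) * ((K+N-r+m).factorial : ℝ) := by
      exact_mod_cast congrArg (fun x : ℕ => (x : ℝ)) h2.symm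
    have hA : (((r-m).factorial : ℝ) * ((K+N-r+m).factorial : ℝ)) ≠ 0 :=
      mul_ne_zero (Nat.cast_ne_zero.mpr (Nat.factorial_ne_zero _))
        (Nat.cast_ne_zero.mpr (Nat.factorial_ne_zero _))
    have hB : (((K+N).factorial : ℕ) : ℝ) ≠ 0 := Nat.cast_ne_zero.mpr (Nat.factorial_ne_zero _)
    rw [div_eq_div_iff hA hB, h2c]
    ring
  rw [Finset.sum_congr rfl hterm, ← Finset.sum_div]
  congr 1
  exact_mod_cast key


lemma mainSum (N K L : ℕ) (hN : 0 < N) (hK : K < N) (hL : L < N) :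
    ∑ j ∈ range N, ((-1:ℝ)^j / ((K + j + 1).factorial : ℝ)) *
      ((j.factorial : ℝ) * (((N-1).choose j : ℕ) : ℝ) *
        ∑ m ∈ range (j+1), ((((N-(j+1)+m).choose L : ℕ) : ℝ) * (((N-1+m).choose m : ℕ) : ℝ)))
    = (-1:ℝ)^(N-1+K) * ((N-1).factorial : ℝ) / ((K+N).factorial : ℝ)
        * (if K = L then 1 else 0) := by
  -- the double-sum kernel
  set g : ℕ → ℕ → ℝ := fun j m =>
    (-1:ℝ)^j * ((N-1).factorial : ℝ) * (((N-(j+1)+m).choose L : ℕ) : ℝ)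
      * (((N-1+m).choose m : ℕ) : ℝ) / (((N-1-j).factorial : ℝ) * ((K+j+1).factorial : ℝ)) with hg
  have step1 : ∀ j ∈ range N, ((-1:ℝ)^j / ((K + j + 1).factorial : ℝ)) *
      ((j.factorial : ℝ) * (((N-1).choose j : ℕ) : ℝ) *
        ∑ m ∈ range (j+1), ((((N-(j+1)+m).choose L : ℕ) : ℝ) * (((N-1+m).choose m : ℕ) : ℝ)))
      = ∑ m ∈ range (j+1), g j m := by
    intro j hj
    have hj' : j ≤ N - 1 := by simp at hj; omega
    have hfac : (N-1).choose j * j.factorial * (N-1-j).factorial = (N-1).factorial :=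
      Nat.choose_mul_factorial_mul_factorial hj'
    have hfacR : (((N-1).choose j : ℕ) : ℝ) * (j.factorial : ℝ) * ((N-1-j).factorial : ℝ)
        = ((N-1).factorial : ℝ) := by exact_mod_cast congrArg (fun x : ℕ => (x : ℝ)) hfac
    have expand : ((-1:ℝ)^j / ((K + j + 1).factorial : ℝ)) *
        ((j.factorial : ℝ) * (((N-1).choose j : ℕ) : ℝ) *
          ∑ m ∈ range (j+1), ((((N-(j+1)+m).choose L : ℕ) : ℝ) * (((N-1+m).choose m : ℕ) : ℝ)))
        = ∑ m ∈ range (j+1), ((-1:ℝ)^j * (j.factorial : ℝ) * (((N-1).choose j : ℕ) : ℝ)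
            / ((K + j + 1).factorial : ℝ)
            * ((((N-(j+1)+m).choose L : ℕ) : ℝ) * (((N-1+m).choose m : ℕ) : ℝ))) := by
      rw [← Finset.mul_sum]; ring
    rw [expand]
    refine Finset.sum_congr rfl fun m hm => ?_
    simp only [hg]
    have hA : ((K+j+1).factorial : ℝ) ≠ 0 := Nat.cast_ne_zero.mpr (Nat.factorial_ne_zero _)
    have hB : (((N-1-j).factorial : ℝ) * ((K+j+1).factorial : ℝ)) ≠ 0 :=
      mul_ne_zero (Nat.cast_ne_zero.mpr (Nat.factorial_ne_zero _)) hA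
    rw [div_mul_eq_mul_div, div_eq_div_iff hA hB]
    linear_combination ((-1:ℝ)^j * (((N-(j+1)+m).choose L : ℕ) : ℝ) * (((N-1+m).choose m : ℕ) : ℝ)
      * ((K+j+1).factorial : ℝ)) * hfacR
  rw [Finset.sum_congr rfl step1]
  -- swap to ∑ m, ∑ j ∈ Ico m N
  have step2 : ∑ j ∈ range N, ∑ m ∈ range (j+1), g j m
      = ∑ m ∈ range N, ∑ j ∈ Finset.Ico m N, g j m := by
    simp only [Finset.range_eq_Ico]
    exact (Finset.sum_Ico_Ico_comm 0 N fun m j => g j m).symm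
  rw [step2]
  -- reindex inner j = m + i
  have step3 : ∀ m ∈ range N, ∑ j ∈ Finset.Ico m N, g j m = ∑ i ∈ range (N-m), g (m+i) m := by
    intro m _
    rw [Finset.sum_Ico_eq_sum_range]
  rw [Finset.sum_congr rfl step3]
  -- swap triangles
  rw [lemSwap N (fun i m => g (m+i) m)]
  -- reflect outer index
  rw [← Finset.sum_range_reflect (fun i => ∑ m ∈ range (N-i), g (m+i) m) N]
  -- now per r : inner sum
  have step4 : ∀ r ∈ range N,
      (∑ m ∈ range (N-(N-1-r)), g (m+(N-1-r)) m)
      = (-1:ℝ)^(N-1-r) * ((N-1).factorial : ℝ) * ((r.choose L : ℕ) : ℝ)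
          * (((K.choose r : ℕ) : ℝ) / ((K+N).factorial : ℝ)) := by
    intro r hr
    have hrN : r < N := by simp at hr; omega
    have e0 : N - (N-1-r) = r + 1 := by omega
    rw [e0]
    have e1 : ∀ m ∈ range (r+1), g (m+(N-1-r)) m
        = ((-1:ℝ)^(N-1-r) * ((N-1).factorial : ℝ) * ((r.choose L : ℕ) : ℝ))
          * ((-1:ℝ)^m * (((N-1+m).choose m : ℕ) : ℝ)
             / (((r-m).factorial : ℝ) * ((K+N-r+m).factorial : ℝ))) := by
      intro m hm
      have hm' : m ≤ r := by simp at hm; omega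
      simp only [hg]
      have i1 : N - (m+(N-1-r)+1) + m = r := by omega
      have i2 : N - 1 - (m+(N-1-r)) = r - m := by omega
      have i3 : K + (m+(N-1-r)) + 1 = K+N-r+m := by omega
      rw [i1, i2, i3, pow_add]
      ring
    rw [Finset.sum_congr rfl e1, ← Finset.mul_sum, lemInner N K r hN hrN]
  rw [Finset.sum_congr rfl step4]
  -- final orthogonality
  have oo := lemO N K L hK
  have ooR : ∑ r ∈ range N, (-1:ℝ)^r * ((K.choose r : ℕ) : ℝ) * ((r.choose L : ℕ) : ℝ)
      = (-1:ℝ)^K * (if K = L then 1 else 0) := by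
    have := congrArg (fun z : ℤ => (z : ℝ)) oo
    push_cast at this
    convert this using 2 <;> simp
  have e2 : ∀ r ∈ range N,
      (-1:ℝ)^(N-1-r) * ((N-1).factorial : ℝ) * ((r.choose L : ℕ) : ℝ)
          * (((K.choose r : ℕ) : ℝ) / ((K+N).factorial : ℝ))
      = (((N-1).factorial : ℝ) / ((K+N).factorial : ℝ) * (-1:ℝ)^(N-1))
          * ((-1:ℝ)^r * ((K.choose r : ℕ) : ℝ) * ((r.choose L : ℕ) : ℝ)) := by
    intro r hr
    have hrN : r < N := by simp at hr; omega
    have hsgn : (-1:ℝ)^(N-1-r) = (-1:ℝ)^(N-1) * (-1:ℝ)^r := by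
      rw [← pow_add]
      exact negpow _ _ (by omega)
    rw [hsgn]; ring
  rw [Finset.sum_congr rfl e2, ← Finset.mul_sum, ooR]
  have hsgn2 : (-1:ℝ)^(N-1) * (-1:ℝ)^K = (-1:ℝ)^(N-1+K) := by rw [← pow_add]
  rw [show (((N-1).factorial : ℝ) / ((K+N).factorial : ℝ) * (-1:ℝ)^(N-1))
      * ((-1:ℝ)^K * (if K = L then (1:ℝ) else 0))
      = ((-1:ℝ)^(N-1) * (-1:ℝ)^K) * ((N-1).factorial : ℝ) / ((K+N).factorial : ℝ)
        * (if K = L then (1:ℝ) else 0) from by ring, hsgn2]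


theorem statement_4 (N : ℕ) (hN : 0 < N)
    (V W : Matrix (Fin N) (Fin N) ℝ)
    (hV : ∀ k l : Fin N, V k l = (-1 : ℝ) ^ (l : ℕ) / ((k : ℕ) + (l : ℕ) + 1).factorial)
    (hW : ∀ k l : Fin N, W k l =
      (-1 : ℝ) ^ (N + (l : ℕ) + 1) * (k : ℕ).factorial * ((l : ℕ) + 1).factorial *
        ((N - 1).choose (k : ℕ)) * ((N + (l : ℕ)).choose ((l : ℕ) + 1)) *
        ∑ m ∈ Finset.range ((k : ℕ) + 1),
          (((N - ((k : ℕ) + 1) + m).choose (l : ℕ)) * ((N + m - 1).choose m) : ℝ)) :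
    IsUnit V ∧ V⁻¹ = W := by
  have key : V * W = 1 := by
    ext k l
    rw [Matrix.mul_apply, Matrix.one_apply]
    set K := (k : ℕ) with hKdef
    set L := (l : ℕ) with hLdef
    have hK : K < N := k.isLt
    have hL : L < N := l.isLt
    have hif : (k = l) ↔ (K = L) := by
      rw [hKdef, hLdef]; exact (Fin.val_eq_val k l).symm
    clear_value K L
    have hcast : ∀ j : Fin N, V k j * W j l
        = ((-1:ℝ)^(N+L+1) * ((L+1).factorial : ℝ) * (((N+L).choose (L+1) : ℕ) : ℝ))
          * (((-1:ℝ)^(j:ℕ) / ((K + (j:ℕ) + 1).factorial : ℝ)) *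
            (((j:ℕ).factorial : ℝ) * (((N-1).choose (j:ℕ) : ℕ) : ℝ) *
              ∑ m ∈ range ((j:ℕ)+1),
                ((((N-((j:ℕ)+1)+m).choose L : ℕ) : ℝ) * (((N-1+m).choose m : ℕ) : ℝ)))) := by
      intro j
      rw [hV k j, hW j l]
      rw [← hLdef, ← hKdef]
      have hs : ∑ m ∈ range ((j:ℕ)+1),
            ((((N-((j:ℕ)+1)+m).choose L : ℕ) : ℝ) * (((N+m-1).choose m : ℕ) : ℝ))
          = ∑ m ∈ range ((j:ℕ)+1),
            ((((N-((j:ℕ)+1)+m).choose L : ℕ) : ℝ) * (((N-1+m).choose m : ℕ) : ℝ)) := by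
        refine Finset.sum_congr rfl fun m _ => ?_
        have e : N + m - 1 = N - 1 + m := by omega
        rw [e]
      rw [hs]
      ring
    rw [Finset.sum_congr rfl (fun j _ => hcast j), ← Finset.mul_sum]
    rw [Fin.sum_univ_eq_sum_range (fun j => ((-1:ℝ)^j / ((K + j + 1).factorial : ℝ)) *
      ((j.factorial : ℝ) * (((N-1).choose j : ℕ) : ℝ) *
        ∑ m ∈ range (j+1), ((((N-(j+1)+m).choose L : ℕ) : ℝ) * (((N-1+m).choose m : ℕ) : ℝ)))) N]
    rw [mainSum N K L hN hK hL]
    by_cases h : K = L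
    · rw [if_pos h, if_pos (hif.mpr h)]
      subst h
      have hfac : (N+K).choose (K+1) * (K+1).factorial * ((N+K)-(K+1)).factorial
          = (N+K).factorial := Nat.choose_mul_factorial_mul_factorial (by omega)
      have e : (N+K) - (K+1) = N - 1 := by omega
      rw [e] at hfac
      have hfacR : (((N+K).choose (K+1) : ℕ) : ℝ) * ((K+1).factorial : ℝ) * ((N-1).factorial : ℝ)
          = ((N+K).factorial : ℝ) := by exact_mod_cast congrArg (fun x : ℕ => (x : ℝ)) hfac
      have hsgn : (-1:ℝ)^(N+K+1) * (-1:ℝ)^(N-1+K) = 1 := by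
        rw [← pow_add, negpow (N+K+1+(N-1+K)) 0 (by omega), pow_zero]
      have hKN : ((K+N).factorial : ℝ) ≠ 0 := Nat.cast_ne_zero.mpr (Nat.factorial_ne_zero _)
      have hKN' : K + N = N + K := by omega
      field_simp
      rw [hKN']
      calc (-1:ℝ)^(N+K+1) * ((K+1).factorial : ℝ) * (((N+K).choose (K+1) : ℕ) : ℝ)
            * (-1:ℝ)^(N-1+K) * ((N-1).factorial : ℝ)
          = ((-1:ℝ)^(N+K+1) * (-1:ℝ)^(N-1+K)) *
              ((((N+K).choose (K+1) : ℕ) : ℝ) * ((K+1).factorial : ℝ) * ((N-1).factorial : ℝ)) := by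
            ring
        _ = ((N+K).factorial : ℝ) := by rw [hsgn, hfacR]; ring
    · rw [if_neg h, if_neg (fun hh => h (hif.mp hh))]
      simp
  exact ⟨(Matrix.isUnit_iff_isUnit_det V).mpr (Matrix.isUnit_det_of_right_inverse key), Matrix.inv_eq_right_inv key⟩
end

section
/- For all s, t ∈ [0,1], the series Σ_{n=0}^∞ (2n+1)·(∫_0^s Q_n(r) dr)·(∫_0^t Q_n(r) dr) converges absolutely and its sum equals min(s, t). -/
/-- The shifted Legendre polynomial on `[0,1]`. -/
noncomputable def legQ (n : ℕ) (t : ℝ) : ℝ := legP n (2 * t - 1)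

open Polynomial intervalIntegral MeasureTheory
open scoped ENNReal

lemma iteratedDeriv_polyeval (p : Polynomial ℝ) (k : ℕ) :
    iteratedDeriv k (fun y : ℝ => p.eval y) = fun y => (derivative^[k] p).eval y := by
  induction k with
  | zero => simp
  | succ k ih =>
    rw [iteratedDeriv_succ, ih, Function.iterate_succ_apply']
    funext y
    exact Polynomial.deriv (p := derivative^[k] p)

/-- raw Rodrigues polynomial -/
noncomputable def rodraw (n : ℕ) : Polynomial ℝ := derivative^[n] ((X ^ 2 - 1) ^ n)

lemma legP_eq (n : ℕ) (x : ℝ) :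
    legP n x = (1 / (2 ^ n * n.factorial) : ℝ) * (rodraw n).eval x := by
  have : (fun y : ℝ => ((y : ℝ) ^ 2 - 1) ^ n) = fun y : ℝ => (((X : Polynomial ℝ) ^ 2 - 1) ^ n).eval y := by
    funext y; simp
  rw [legP, this, iteratedDeriv_polyeval]
  rfl

lemma rodraw_factor (n k : ℕ) (hk : k ≤ n) :
    ∃ q : Polynomial ℝ, derivative^[k] ((X ^ 2 - 1) ^ n : Polynomial ℝ)
      = (X ^ 2 - 1) ^ (n - k) * q := by
  induction k with
  | zero => exact ⟨1, by simp⟩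
  | succ k ih =>
    obtain ⟨q, hq⟩ := ih (le_of_lt hk)
    refine ⟨C ((n - k : ℕ) : ℝ) * (2 * X * q) + (X ^ 2 - 1) * derivative q, ?_⟩
    rw [Function.iterate_succ_apply', hq]
    have h1 : n - k = (n - (k + 1)) + 1 := by omega
    have hd : derivative ((X : Polynomial ℝ) ^ 2 - 1) = 2 * X := by
      simp [derivative_X_pow, map_ofNat]
      norm_num
    rw [derivative_mul, derivative_pow, hd, h1, pow_succ]
    push_cast [h1]
    ring

lemma rodraw_boundary (n k : ℕ) (hk : k < n) (x : ℝ) (hx : x ^ 2 = 1) :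
    (derivative^[k] ((X ^ 2 - 1) ^ n : Polynomial ℝ)).eval x = 0 := by
  obtain ⟨q, hq⟩ := rodraw_factor n k hk.le
  rw [hq]
  have h1 : n - k ≠ 0 := by omega
  simp [hx, zero_pow h1]

lemma poly_ibp (p q : Polynomial ℝ) (a b : ℝ) :
    ∫ x in a..b, p.eval x * (derivative q).eval x
      = p.eval b * q.eval b - p.eval a * q.eval a
        - ∫ x in a..b, (derivative p).eval x * q.eval x := by
  apply intervalIntegral.integral_mul_deriv_eq_deriv_mul
  · exact fun x _ => p.hasDerivAt x
  · exact fun x _ => q.hasDerivAt x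
  · exact ((derivative p).continuous_aeval.intervalIntegrable a b)
  · exact ((derivative q).continuous_aeval.intervalIntegrable a b)

lemma parts (n : ℕ) (p : Polynomial ℝ) (k : ℕ) (hk : k ≤ n) :
    ∫ x in (-1:ℝ)..1, p.eval x * (rodraw n).eval x
      = (-1 : ℝ) ^ k * ∫ x in (-1:ℝ)..1,
          (derivative^[k] p).eval x * (derivative^[n - k] ((X ^ 2 - 1) ^ n)).eval x := by
  induction k with
  | zero => simp [rodraw]
  | succ k ih =>
    rw [ih (le_of_lt hk)]
    have h1 : n - k = (n - (k + 1)) + 1 := by omega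
    have key : ∫ x in (-1:ℝ)..1,
        (derivative^[k] p).eval x * (derivative^[n - k] ((X ^ 2 - 1) ^ n)).eval x
        = - ∫ x in (-1:ℝ)..1,
            (derivative^[k+1] p).eval x * (derivative^[n - (k+1)] ((X ^ 2 - 1) ^ n)).eval x := by
      have h2 : derivative^[n - k] ((X ^ 2 - 1) ^ n : Polynomial ℝ)
          = derivative (derivative^[n - (k+1)] ((X ^ 2 - 1) ^ n)) := by
        rw [h1, Function.iterate_succ_apply']
      rw [h2, poly_ibp]
      rw [rodraw_boundary n (n - (k+1)) (by omega) 1 (by norm_num),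
        rodraw_boundary n (n - (k+1)) (by omega) (-1) (by norm_num)]
      rw [Function.iterate_succ_apply']
      ring
    rw [key]
    ring

lemma kill (n : ℕ) (p : Polynomial ℝ) (hp : p.natDegree < n) :
    ∫ x in (-1:ℝ)..1, p.eval x * (rodraw n).eval x = 0 := by
  rw [parts n p n le_rfl, iterate_derivative_eq_zero hp]
  simp

lemma poly_ftc (H : Polynomial ℝ) (a b : ℝ) :
    ∫ x in a..b, (derivative H).eval x = H.eval b - H.eval a := by
  apply integral_deriv_eq_sub' (fun x => H.eval x)
  · funext x; exact Polynomial.deriv (p := H)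
  · exact fun x _ => H.differentiableAt
  · exact (derivative H).continuous_aeval.continuousOn

lemma wallis (n : ℕ) : ∫ x in (-1:ℝ)..1, ((X ^ 2 - 1 : Polynomial ℝ) ^ n).eval x
    = (-1 : ℝ) ^ n * 2 ^ (2 * n + 1) * (n.factorial : ℝ) ^ 2 / ((2 * n + 1).factorial : ℝ) := by
  induction n with
  | zero => norm_num
  | succ n ih =>
    have hd : derivative ((X : Polynomial ℝ) * (X ^ 2 - 1) ^ (n + 1))
        = (2 * (n : Polynomial ℝ) + 3) * (X ^ 2 - 1) ^ (n + 1)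
          + (2 * (n : Polynomial ℝ) + 2) * (X ^ 2 - 1) ^ n := by
      have hd2 : derivative ((X : Polynomial ℝ) ^ 2 - 1) = 2 * X := by
        simp [derivative_X_pow, map_ofNat]
        norm_num
      rw [derivative_mul, derivative_pow, hd2, derivative_X, C_eq_natCast]
      push_cast
      ring
    have h0 : ((X : Polynomial ℝ) * (X ^ 2 - 1) ^ (n + 1)).eval 1
        - ((X : Polynomial ℝ) * (X ^ 2 - 1) ^ (n + 1)).eval (-1) = 0 := by
      simp
    have h2 := poly_ftc ((X : Polynomial ℝ) * (X ^ 2 - 1) ^ (n + 1)) (-1) 1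
    rw [hd, h0] at h2
    have h3 : ∀ x : ℝ, (((2 * (n : Polynomial ℝ) + 3) * (X ^ 2 - 1) ^ (n + 1)
          + (2 * (n : Polynomial ℝ) + 2) * (X ^ 2 - 1) ^ n : Polynomial ℝ)).eval x
        = (2 * (n:ℝ) + 3) * ((X ^ 2 - 1 : Polynomial ℝ) ^ (n+1)).eval x
          + (2 * (n:ℝ) + 2) * ((X ^ 2 - 1 : Polynomial ℝ) ^ n).eval x := by
      intro x; simp
    rw [intervalIntegral.integral_congr (fun x _ => h3 x), intervalIntegral.integral_add
        (f := fun x => (2 * (n:ℝ) + 3) * ((X ^ 2 - 1 : Polynomial ℝ) ^ (n+1)).eval x)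
        (g := fun x => (2 * (n:ℝ) + 2) * ((X ^ 2 - 1 : Polynomial ℝ) ^ n).eval x)
        ((continuous_const.mul ((X ^ 2 - 1 : Polynomial ℝ) ^ (n+1)).continuous).intervalIntegrable _ _)
        ((continuous_const.mul ((X ^ 2 - 1 : Polynomial ℝ) ^ n).continuous).intervalIntegrable _ _),
      intervalIntegral.integral_const_mul, intervalIntegral.integral_const_mul, ih] at h2
    have h4 : (2 * (n:ℝ) + 3) ≠ 0 := by positivity
    have h5 : ∫ x in (-1:ℝ)..1, ((X ^ 2 - 1 : Polynomial ℝ) ^ (n+1)).eval x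
        = -(2 * (n:ℝ) + 2) / (2 * n + 3)
          * ((-1 : ℝ) ^ n * 2 ^ (2 * n + 1) * (n.factorial : ℝ) ^ 2 / ((2 * n + 1).factorial : ℝ)) := by
      have hfne : ((2 * n + 1).factorial : ℝ) ≠ 0 := Nat.cast_ne_zero.mpr (Nat.factorial_ne_zero _)
      field_simp at h2 ⊢
      linarith [h2]
    rw [h5]
    have hf1 : ((n+1).factorial : ℝ) = (n + 1) * n.factorial := by
      rw [Nat.factorial_succ]; push_cast; ring
    have hf2 : ((2 * (n+1) + 1).factorial : ℝ)
        = (2 * n + 3) * ((2 * n + 2) * ((2 * n + 1).factorial : ℝ)) := by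
      have he : 2 * (n + 1) + 1 = (2 * n + 2) + 1 := by ring
      rw [he, Nat.factorial_succ, Nat.factorial_succ]; push_cast; ring
    have hfne : ((2 * n + 1).factorial : ℝ) ≠ 0 := Nat.cast_ne_zero.mpr (Nat.factorial_ne_zero _)
    rw [hf2, hf1]
    field_simp
    ring

lemma g_monic (n : ℕ) : ((X ^ 2 - 1 : Polynomial ℝ) ^ n).Monic := by
  have h : ((X : Polynomial ℝ) ^ 2 - 1) = X ^ 2 - C 1 := by simp
  rw [h]
  exact (monic_X_pow_sub_C (1:ℝ) two_ne_zero).pow n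

lemma g_natDegree (n : ℕ) : ((X ^ 2 - 1 : Polynomial ℝ) ^ n).natDegree = 2 * n := by
  have h : ((X : Polynomial ℝ) ^ 2 - 1) = X ^ 2 - C 1 := by simp
  rw [h, natDegree_pow, natDegree_X_pow_sub_C]
  ring

lemma g_coeff (n : ℕ) : ((X ^ 2 - 1 : Polynomial ℝ) ^ n).coeff (2 * n) = 1 := by
  have := (g_monic n).coeff_natDegree
  rwa [g_natDegree] at this

lemma D2n_g (n : ℕ) :
    derivative^[2 * n] ((X ^ 2 - 1 : Polynomial ℝ) ^ n) = C (((2 * n).factorial : ℝ)) := by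
  have hdeg : (derivative^[2 * n] ((X ^ 2 - 1 : Polynomial ℝ) ^ n)).natDegree = 0 := by
    have := natDegree_iterate_derivative ((X ^ 2 - 1 : Polynomial ℝ) ^ n) (2 * n)
    rw [g_natDegree] at this
    omega
  rw [eq_C_of_natDegree_eq_zero hdeg, coeff_iterate_derivative]
  rw [zero_add, g_coeff, Nat.descFactorial_self]
  simp

lemma rodraw_natDegree_le (n : ℕ) : (rodraw n).natDegree ≤ n := by
  have := natDegree_iterate_derivative ((X ^ 2 - 1 : Polynomial ℝ) ^ n) n
  rw [g_natDegree] at this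
  rw [rodraw]
  omega

lemma rodraw_coeff (n : ℕ) : (rodraw n).coeff n = ((2 * n).descFactorial n : ℝ) := by
  rw [rodraw, coeff_iterate_derivative]
  have h : n + n = 2 * n := by ring
  rw [h, g_coeff]
  simp

lemma rodraw_norm (n : ℕ) :
    ∫ x in (-1:ℝ)..1, (rodraw n).eval x * (rodraw n).eval x
      = ((2 * n).factorial : ℝ) * 2 ^ (2 * n + 1) * (n.factorial : ℝ) ^ 2
          / ((2 * n + 1).factorial : ℝ) := by
  rw [parts n (rodraw n) n le_rfl]
  have h1 : derivative^[n] (rodraw n) = C (((2 * n).factorial : ℝ)) := by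
    rw [rodraw, ← Function.iterate_add_apply, ← two_mul, D2n_g]
  rw [h1, Nat.sub_self]
  simp only [Function.iterate_zero_apply, eval_C]
  rw [intervalIntegral.integral_const_mul, wallis]
  rw [show ((-1:ℝ)^n * (((2*n).factorial : ℝ) * ((-1:ℝ)^n * 2^(2*n+1) * (n.factorial:ℝ)^2 / ((2*n+1).factorial : ℝ))))
      = ((-1:ℝ)^n * (-1:ℝ)^n) * (((2*n).factorial : ℝ) * (2^(2*n+1) * (n.factorial:ℝ)^2 / ((2*n+1).factorial : ℝ))) from by ring]
  rw [← pow_add, ← two_mul, pow_mul]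
  norm_num
  ring

lemma rodraw_orth {m n : ℕ} (h : m < n) :
    ∫ x in (-1:ℝ)..1, (rodraw m).eval x * (rodraw n).eval x = 0 :=
  kill n (rodraw m) (lt_of_le_of_lt (rodraw_natDegree_le m) h)

lemma legP_inner (m n : ℕ) :
    ∫ x in (-1:ℝ)..1, legP m x * legP n x
      = if m = n then 2 / (2 * (n:ℝ) + 1) else 0 := by
  have hcongr : ∀ x : ℝ, legP m x * legP n x
      = ((1 / (2 ^ m * m.factorial) : ℝ) * (1 / (2 ^ n * n.factorial) : ℝ))
        * ((rodraw m).eval x * (rodraw n).eval x) := by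
    intro x; rw [legP_eq, legP_eq]; ring
  rw [intervalIntegral.integral_congr (fun x _ => hcongr x),
    intervalIntegral.integral_const_mul]
  rcases lt_trichotomy m n with h | h | h
  · rw [rodraw_orth h, if_neg h.ne]
    ring
  · subst h
    rw [if_pos rfl, rodraw_norm]
    have h2 : ((2 * m + 1).factorial : ℝ) = (2 * (m:ℝ) + 1) * ((2 * m).factorial : ℝ) := by
      rw [Nat.factorial_succ]; push_cast; ring
    have hm : (m.factorial : ℝ) ≠ 0 := Nat.cast_ne_zero.mpr (Nat.factorial_ne_zero _)
    have h2m : ((2 * m).factorial : ℝ) ≠ 0 := Nat.cast_ne_zero.mpr (Nat.factorial_ne_zero _)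
    have hp : (2:ℝ) ^ (2 * m + 1) = 2 * ((2:ℝ) ^ m) ^ 2 := by
      rw [pow_add, pow_one, mul_comm 2 m, pow_mul]
      ring
    have h21 : (2 * (m:ℝ) + 1) ≠ 0 := by positivity
    rw [h2, hp]
    field_simp
  · have : ∫ x in (-1:ℝ)..1, (rodraw m).eval x * (rodraw n).eval x = 0 := by
      rw [intervalIntegral.integral_congr (g := fun x => (rodraw n).eval x * (rodraw m).eval x)
        (fun x _ => mul_comm _ _)]
      exact rodraw_orth h
    rw [this, if_neg h.ne']
    ring

lemma legQ_inner (m n : ℕ) :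
    ∫ t in (0:ℝ)..1, legQ m t * legQ n t
      = if m = n then 1 / (2 * (n:ℝ) + 1) else 0 := by
  have h := intervalIntegral.integral_comp_mul_sub (a := (0:ℝ)) (b := 1)
    (fun x => legP m x * legP n x) (two_ne_zero) 1
  norm_num at h
  have h2 : ∀ t : ℝ, legQ m t * legQ n t = legP m (2 * t - 1) * legP n (2 * t - 1) := by
    intro t; rfl
  rw [intervalIntegral.integral_congr (fun t _ => h2 t), h, legP_inner]
  rcases eq_or_ne m n with rfl | hne
  · rw [if_pos rfl, if_pos rfl]
    have : (2 * (m:ℝ) + 1) ≠ 0 := by positivity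
    field_simp
  · rw [if_neg hne, if_neg hne, mul_zero]

noncomputable def sqp (n : ℕ) : Polynomial ℝ :=
  (C ((1 : ℝ) / (2 ^ n * n.factorial)) * rodraw n).comp (C 2 * X - C 1)

lemma legQ_eq (n : ℕ) (t : ℝ) : legQ n t = (sqp n).eval t := by
  rw [legQ, legP_eq, sqp, eval_comp]
  simp

lemma cfac_ne (n : ℕ) : ((1 : ℝ) / (2 ^ n * n.factorial)) ≠ 0 := by
  have : (n.factorial : ℝ) ≠ 0 := Nat.cast_ne_zero.mpr (Nat.factorial_ne_zero _)
  positivity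

lemma rodraw_coeff_ne (n : ℕ) : (rodraw n).coeff n ≠ 0 := by
  rw [rodraw_coeff]
  intro h
  rw [Nat.cast_eq_zero, Nat.descFactorial_eq_zero_iff_lt] at h
  omega

lemma rodraw_natDegree (n : ℕ) : (rodraw n).natDegree = n :=
  le_antisymm (rodraw_natDegree_le n) (le_natDegree_of_ne_zero (rodraw_coeff_ne n))

lemma lin_natDegree : (C (2:ℝ) * X - C 1).natDegree = 1 := by
  have h : (C (2:ℝ) * X - C 1) = C 2 * X + C (-1) := by
    rw [map_neg]; ring
  rw [h, natDegree_linear two_ne_zero]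

lemma sq_natDegree (n : ℕ) : (sqp n).natDegree = n := by
  rw [sqp, natDegree_comp, lin_natDegree, natDegree_C_mul (cfac_ne n), rodraw_natDegree, mul_one]

lemma sq_ne_zero (n : ℕ) : sqp n ≠ 0 := by
  have hlc : (sqp n).leadingCoeff ≠ 0 := by
    rw [sqp, leadingCoeff_comp (by rw [lin_natDegree]; norm_num)]
    apply mul_ne_zero
    · rw [leadingCoeff, natDegree_C_mul (cfac_ne n), rodraw_natDegree, coeff_C_mul]
      exact mul_ne_zero (cfac_ne n) (rodraw_coeff_ne n)
    · apply pow_ne_zero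
      have h : (C (2:ℝ) * X - C 1) = C 2 * X + C (-1) := by rw [map_neg]; ring
      rw [h, leadingCoeff_linear two_ne_zero]
      norm_num
  exact leadingCoeff_ne_zero.mp hlc

lemma sq_coeff_ne (n : ℕ) : (sqp n).coeff n ≠ 0 := by
  have := leadingCoeff_ne_zero.mpr (sq_ne_zero n)
  rwa [leadingCoeff, sq_natDegree] at this

lemma mem_span_sq_aux : ∀ d : ℕ, ∀ p : Polynomial ℝ, p.natDegree ≤ d →
    p ∈ Submodule.span ℝ (Set.range sqp) := by
  intro d
  induction d using Nat.strong_induction_on with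
  | _ d ih =>
    intro p hpd
    by_cases hp0 : p = 0
    · simp [hp0]
    set k := p.natDegree with hk
    set c : ℝ := p.coeff k / (sqp k).coeff k with hc
    set q : Polynomial ℝ := p - c • sqp k with hq
    have hmem : c • sqp k ∈ Submodule.span ℝ (Set.range sqp) :=
      Submodule.smul_mem _ _ (Submodule.subset_span ⟨k, rfl⟩)
    have hq_coeff : q.coeff k = 0 := by
      rw [hq, coeff_sub, coeff_smul, hc, smul_eq_mul,
        div_mul_cancel₀ _ (sq_coeff_ne k), sub_self]
    have hqd : q.natDegree ≤ k := by
      refine le_trans (natDegree_sub_le _ _) ?_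
      simp only [max_le_iff]
      exact ⟨le_rfl, le_trans (natDegree_smul_le _ _) (le_of_eq (sq_natDegree k))⟩
    rcases eq_or_ne q 0 with hq0 | hq0
    · have : p = c • sqp k := by rwa [hq, sub_eq_zero] at hq0
      rw [this]; exact hmem
    · have hqk : q.natDegree ≠ k := by
        intro h
        apply hq0
        have : q.leadingCoeff = 0 := by rw [leadingCoeff, h, hq_coeff]
        exact leadingCoeff_eq_zero.mp this
      have hqlt : q.natDegree < k := lt_of_le_of_ne hqd hqk
      have hklt : 0 < d := lt_of_le_of_lt (Nat.zero_le _) (lt_of_lt_of_le hqlt hpd)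
      have hqmem : q ∈ Submodule.span ℝ (Set.range sqp) :=
        ih (d - 1) (by omega) q (by omega)
      have : p = q + c • sqp k := by rw [hq]; ring
      rw [this]
      exact Submodule.add_mem _ hqmem hmem

noncomputable def mu01 : Measure ℝ := volume.restrict (Set.Ioc (0:ℝ) 1)

lemma mu01_univ : mu01 Set.univ = 1 := by
  rw [mu01, Measure.restrict_apply_univ, Real.volume_Ioc]
  norm_num

instance : IsFiniteMeasure mu01 := ⟨by rw [mu01_univ]; exact ENNReal.one_lt_top⟩

instance : mu01.WeaklyRegular := by
  rw [mu01]
  exact MeasureTheory.Measure.WeaklyRegular.restrict_of_measure_ne_top (by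
    rw [Real.volume_Ioc]; exact ENNReal.ofReal_ne_top)

lemma memL2_cont {f : ℝ → ℝ} (hf : Continuous f) : MemLp f 2 mu01 := by
  obtain ⟨C, hC⟩ := (isCompact_Icc (a := (0:ℝ)) (b := 1)).exists_bound_of_continuousOn
    hf.continuousOn
  refine MemLp.of_bound (hf.aestronglyMeasurable) C ?_
  rw [mu01, ae_restrict_iff' measurableSet_Ioc]
  exact Filter.Eventually.of_forall fun x hx => hC x (Set.Ioc_subset_Icc_self hx)

lemma legQ_cont (n : ℕ) : Continuous (legQ n) := by
  have : legQ n = fun t => (sqp n).eval t := funext (legQ_eq n)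
  rw [this]
  exact (sqp n).continuous

noncomputable def phi (n : ℕ) : Lp ℝ 2 mu01 :=
  (memL2_cont ((continuous_const (y := Real.sqrt (2 * n + 1))).mul (legQ_cont n))).toLp
    (fun x => Real.sqrt (2 * (n:ℝ) + 1) * legQ n x)

lemma inner_toLp {f g : ℝ → ℝ} (hf : MemLp f 2 mu01) (hg : MemLp g 2 mu01) :
    (inner ℝ (hf.toLp f) (hg.toLp g) : ℝ) = ∫ x in (0:ℝ)..1, f x * g x := by
  rw [MeasureTheory.L2.inner_def]
  rw [intervalIntegral.integral_of_le zero_le_one]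
  have : ∫ x, (inner ℝ ((hf.toLp f : Lp ℝ 2 mu01) x) ((hg.toLp g : Lp ℝ 2 mu01) x) : ℝ) ∂mu01
      = ∫ x, f x * g x ∂mu01 := by
    apply MeasureTheory.integral_congr_ae
    filter_upwards [hf.coeFn_toLp, hg.coeFn_toLp] with x hfx hgx
    rw [hfx, hgx, RCLike.inner_apply', conj_trivial]
  rw [this, mu01]

lemma phi_orthonormal : Orthonormal ℝ phi := by
  rw [orthonormal_iff_ite]
  intro m n
  rw [phi, phi, inner_toLp]
  have h : ∀ x : ℝ, (Real.sqrt (2 * (m:ℝ) + 1) * legQ m x) * (Real.sqrt (2 * (n:ℝ) + 1) * legQ n x)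
      = (Real.sqrt (2 * (m:ℝ) + 1) * Real.sqrt (2 * (n:ℝ) + 1)) * (legQ m x * legQ n x) := by
    intro x; ring
  rw [intervalIntegral.integral_congr (fun x _ => h x), intervalIntegral.integral_const_mul,
    legQ_inner]
  rcases eq_or_ne m n with rfl | hne
  · rw [if_pos rfl, if_pos rfl, Real.mul_self_sqrt (by positivity : (0:ℝ) ≤ 2 * (m:ℝ) + 1)]
    have : (2 * (m:ℝ) + 1) ≠ 0 := by positivity
    field_simp
  · rw [if_neg hne, if_neg hne, mul_zero]

lemma toLp_eq_toLp {f g : ℝ → ℝ} (hf : MemLp f 2 mu01) (hg : MemLp g 2 mu01) (h : f = g) :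
    hf.toLp f = hg.toLp g := by subst h; rfl

noncomputable def T : Polynomial ℝ →ₗ[ℝ] Lp ℝ 2 mu01 where
  toFun p := (memL2_cont p.continuous).toLp (fun x => p.eval x)
  map_add' p q := by
    rw [← MemLp.toLp_add (memL2_cont p.continuous) (memL2_cont q.continuous)]
    exact toLp_eq_toLp _ _ (by funext x; simp [Pi.add_apply])
  map_smul' c p := by
    simp only [RingHom.id_apply]
    rw [← MemLp.toLp_const_smul c (memL2_cont p.continuous)]
    exact toLp_eq_toLp _ _ (by funext x; simp [Pi.smul_apply, smul_eq_mul])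

lemma phi_eq_smul_T (n : ℕ) : phi n = Real.sqrt (2 * (n:ℝ) + 1) • T (sqp n) := by
  rw [phi]
  show _ = Real.sqrt (2 * (n:ℝ) + 1) • (memL2_cont (sqp n).continuous).toLp _
  rw [← MemLp.toLp_const_smul]
  exact toLp_eq_toLp _ _ (by
    funext x
    simp only [Pi.smul_apply, smul_eq_mul]
    rw [legQ_eq])

lemma T_mem_span (p : Polynomial ℝ) : T p ∈ Submodule.span ℝ (Set.range phi) := by
  have h := mem_span_sq_aux p.natDegree p le_rfl
  induction h using Submodule.span_induction with
  | mem x hx =>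
    obtain ⟨n, rfl⟩ := hx
    have hs : Real.sqrt (2 * (n:ℝ) + 1) ≠ 0 := by positivity
    have : T (sqp n) = (Real.sqrt (2 * (n:ℝ) + 1))⁻¹ • phi n := by
      rw [phi_eq_smul_T, smul_smul, inv_mul_cancel₀ hs, one_smul]
    rw [this]
    exact Submodule.smul_mem _ _ (Submodule.subset_span ⟨n, rfl⟩)
  | zero => simp
  | add x y hx hy ihx ihy => rw [map_add]; exact Submodule.add_mem _ ihx ihy
  | smul a x hx ih => rw [_root_.map_smul]; exact Submodule.smul_mem _ _ ih

lemma dense_span_phi : ⊤ ≤ (Submodule.span ℝ (Set.range phi)).topologicalClosure := by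
  intro F _
  rw [← SetLike.mem_coe, Submodule.topologicalClosure_coe]
  rw [Metric.mem_closure_iff]
  intro ε hε
  have hε3 : (0:ℝ) < ε / 3 := by linarith
  obtain ⟨g, hg, g_mem⟩ := (Lp.memLp F).exists_boundedContinuous_eLpNorm_sub_le
    (by norm_num : (2:ℝ≥0∞) ≠ ∞) (ε := ENNReal.ofReal (ε/3))
    (by simp [ENNReal.ofReal_eq_zero]; linarith)
  obtain ⟨q, hq⟩ := exists_polynomial_near_of_continuousOn 0 1 g
    g.continuous.continuousOn (ε/3) hε3
  refine ⟨T q, T_mem_span q, ?_⟩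
  have h1 : ‖F - g_mem.toLp g‖ ≤ ε / 3 := by
    rw [Lp.norm_def]
    have hae : (⇑(F - g_mem.toLp g) : ℝ → ℝ) =ᵐ[mu01] (⇑F - ⇑g) := by
      filter_upwards [Lp.coeFn_sub F (g_mem.toLp g), g_mem.coeFn_toLp] with x h1 h2
      rw [h1]; simp [h2]
    rw [eLpNorm_congr_ae hae]
    refine ENNReal.toReal_le_of_le_ofReal hε3.le ?_
    exact le_trans hg (le_of_eq rfl)
  have h2 : ‖g_mem.toLp g - T q‖ ≤ ε / 3 := by
    rw [Lp.norm_def]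
    have hae : (⇑(g_mem.toLp g - T q) : ℝ → ℝ) =ᵐ[mu01] (fun x => g x - q.eval x) := by
      have h3 : (⇑(T q) : ℝ → ℝ) =ᵐ[mu01] fun x => q.eval x :=
        MemLp.coeFn_toLp (memL2_cont q.continuous)
      filter_upwards [Lp.coeFn_sub (g_mem.toLp g) (T q), g_mem.coeFn_toLp, h3] with x ha hb hc
      rw [ha]; simp [hb, hc]
    rw [eLpNorm_congr_ae hae]
    have hbound : ∀ᵐ x ∂mu01, ‖g x - q.eval x‖ ≤ ε / 3 := by
      rw [mu01, ae_restrict_iff' measurableSet_Ioc]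
      refine Filter.Eventually.of_forall fun x hx => ?_
      have := hq x (Set.Ioc_subset_Icc_self hx)
      rw [Real.norm_eq_abs, abs_sub_comm]
      exact this.le
    have := eLpNorm_le_of_ae_bound hbound (p := 2) (μ := mu01)
    rw [mu01_univ, ENNReal.one_rpow, one_mul] at this
    exact ENNReal.toReal_le_of_le_ofReal hε3.le this
  have : dist F (T q) ≤ ε / 3 + ε / 3 := by
    rw [dist_eq_norm]
    calc ‖F - T q‖ ≤ ‖F - g_mem.toLp g‖ + ‖g_mem.toLp g - T q‖ := by
          rw [show F - T q = (F - g_mem.toLp g) + (g_mem.toLp g - T q) by abel]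
          exact norm_add_le _ _
    _ ≤ ε / 3 + ε / 3 := add_le_add h1 h2
  linarith [this]

noncomputable def bas : HilbertBasis ℕ ℝ (Lp ℝ 2 mu01) :=
  HilbertBasis.mk phi_orthonormal dense_span_phi

lemma bas_apply (n : ℕ) : bas n = phi n := by
  rw [bas, HilbertBasis.coe_mk]

lemma memL2_ind (u : ℝ) : MemLp (Set.indicator (Set.Ioc (0:ℝ) u) (fun _ => (1:ℝ))) 2 mu01 :=
  memLp_indicator_const 2 measurableSet_Ioc 1 (Or.inr (measure_ne_top _ _))

lemma inner_ind (u : ℝ) (hu0 : 0 ≤ u) (hu1 : u ≤ 1) {f : ℝ → ℝ} (hf : MemLp f 2 mu01) :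
    (inner ℝ ((memL2_ind u).toLp _) (hf.toLp f) : ℝ) = ∫ r in (0:ℝ)..u, f r := by
  rw [inner_toLp]
  rw [intervalIntegral.integral_of_le zero_le_one, intervalIntegral.integral_of_le hu0]
  have h : ∀ r : ℝ, Set.indicator (Set.Ioc (0:ℝ) u) (fun _ => (1:ℝ)) r * f r
      = Set.indicator (Set.Ioc (0:ℝ) u) f r := by
    intro r
    by_cases hr : r ∈ Set.Ioc (0:ℝ) u
    · rw [Set.indicator_of_mem hr, Set.indicator_of_mem hr, one_mul]
    · rw [Set.indicator_of_notMem hr, Set.indicator_of_notMem hr, zero_mul]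
  simp_rw [h]
  rw [setIntegral_indicator measurableSet_Ioc]
  congr 1
  rw [Set.Ioc_inter_Ioc, show ((1:ℝ) ⊓ u) = u from inf_eq_right.mpr hu1]
  congr 1
  simp

lemma abs_mul_le_half (a b : ℝ) : |a * b| ≤ (a ^ 2 + b ^ 2) / 2 := by
  nlinarith [sq_nonneg (|a| - |b|), abs_nonneg a, abs_nonneg b, abs_mul a b,
    sq_abs a, sq_abs b]

theorem statement_5 (s t : ℝ) (hs : s ∈ Set.Icc (0 : ℝ) 1) (ht : t ∈ Set.Icc (0 : ℝ) 1) :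
    Summable (fun n : ℕ =>
      |(2 * (n : ℝ) + 1) * (∫ r in (0 : ℝ)..s, legQ n r) * (∫ r in (0 : ℝ)..t, legQ n r)|) ∧
    ∑' n : ℕ, (2 * (n : ℝ) + 1) * (∫ r in (0 : ℝ)..s, legQ n r) * (∫ r in (0 : ℝ)..t, legQ n r)
      = min s t := by
  obtain ⟨hs0, hs1⟩ := hs
  obtain ⟨ht0, ht1⟩ := ht
  set x : Lp ℝ 2 mu01 := (memL2_ind s).toLp _ with hx
  set y : Lp ℝ 2 mu01 := (memL2_ind t).toLp _ with hy
  have key1 : ∀ n : ℕ, (inner ℝ x (phi n) : ℝ)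
      = Real.sqrt (2 * (n:ℝ) + 1) * ∫ r in (0:ℝ)..s, legQ n r := by
    intro n
    rw [hx, phi, inner_ind s hs0 hs1, intervalIntegral.integral_const_mul]
  have key2 : ∀ n : ℕ, (inner ℝ (phi n) y : ℝ)
      = Real.sqrt (2 * (n:ℝ) + 1) * ∫ r in (0:ℝ)..t, legQ n r := by
    intro n
    rw [real_inner_comm, hy, phi, inner_ind t ht0 ht1, intervalIntegral.integral_const_mul]
  have key3 : (inner ℝ x y : ℝ) = min s t := by
    rw [hx, hy, inner_ind s hs0 hs1]
    rw [intervalIntegral.integral_of_le hs0, setIntegral_indicator measurableSet_Ioc,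
      Set.Ioc_inter_Ioc, setIntegral_const]
    rw [smul_eq_mul, mul_one]
    have h1 : (max (0:ℝ) 0) = 0 := by simp
    rw [h1, Real.volume_real_Ioc_of_le (le_min hs0 ht0)]
    simp
  have term : ∀ n : ℕ, (inner ℝ x (phi n) : ℝ) * (inner ℝ (phi n) y : ℝ)
      = (2 * (n : ℝ) + 1) * (∫ r in (0 : ℝ)..s, legQ n r) * (∫ r in (0 : ℝ)..t, legQ n r) := by
    intro n
    rw [key1 n, key2 n]
    have h := Real.mul_self_sqrt (by positivity : (0:ℝ) ≤ 2 * (n:ℝ) + 1)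
    calc Real.sqrt (2 * (n:ℝ) + 1) * (∫ r in (0:ℝ)..s, legQ n r)
          * (Real.sqrt (2 * (n:ℝ) + 1) * ∫ r in (0:ℝ)..t, legQ n r)
        = (Real.sqrt (2 * (n:ℝ) + 1) * Real.sqrt (2 * (n:ℝ) + 1))
          * (∫ r in (0:ℝ)..s, legQ n r) * (∫ r in (0:ℝ)..t, legQ n r) := by ring
      _ = _ := by rw [h]
  constructor
  · have hsum1 : Summable fun n => ‖(inner ℝ (phi n) x : ℝ)‖ ^ 2 :=
      Orthonormal.inner_products_summable x phi_orthonormal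
    have hsum2 : Summable fun n => ‖(inner ℝ (phi n) y : ℝ)‖ ^ 2 :=
      Orthonormal.inner_products_summable y phi_orthonormal
    have hsum : Summable fun n =>
        (‖(inner ℝ (phi n) x : ℝ)‖ ^ 2 + ‖(inner ℝ (phi n) y : ℝ)‖ ^ 2) / 2 :=
      (hsum1.add hsum2).div_const 2
    refine Summable.of_nonneg_of_le (fun n => abs_nonneg _) (fun n => ?_) hsum
    rw [← term n]
    rw [real_inner_comm x (phi n)]
    simp only [Real.norm_eq_abs, sq_abs]
    exact abs_mul_le_half _ _
  · have h := bas.tsum_inner_mul_inner x y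
    rw [key3] at h
    rw [← h]
    apply tsum_congr
    intro n
    rw [bas_apply, term n]
end

section
/- Fix x, y ∈ [−1,1] and for n ≥ 1 set D_{n+1}(x,y) = I_{n+1}(x)·I_n(y) − I_n(x)·I_{n+1}(y), where I_n(x) = ∫_{−1}^x P_n(z) dz. Then for every N ∈ ℕ, (x−y)·Σ_{n=1}^N (2n+1)·I_n(x)·I_n(y) = N·D_{N+1}(x,y) + 2·Σ_{n=1}^N D_{n+1}(x,y). -/
/-!
Write `Q n = (X ^ 2 - 1) ^ n` and `∂` for the derivative. Since `(X + 1) ^ (n + 1)` divides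
`Q (n + 1)`, the polynomial `∂^[n] (Q (n + 1))` vanishes at `-1`, so by Rodrigues' formula it equals
`2 ^ (n + 1) (n + 1)! I_{n+1}`. The Leibniz rule applied to `∂ (Q (n + 1)) = 2 (n + 1) X Q n`
and to `∂ (X Q (n + 1)) = (2n + 3) Q (n + 1) + 2 (n + 1) Q n` yields the three-term recurrence
`(2n + 1) x I_n = (n + 2) I_{n+1} + (n - 1) I_{n-1}` (`n ≥ 1`). Taking it at `x` times `I_n(y)`
minus the same with `x` and `y` swapped gives
`(x - y)(2n + 1) I_n(x) I_n(y) = (n + 2) D_{n+1} - (n - 1) D_n`, and these summands telescope.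
-/

open Finset

/-- The integral `I_n(x) = ∫_{-1}^x P_n(z) dz` of the Legendre polynomial. -/
noncomputable def legIR (n : ℕ) (x : ℝ) : ℝ := ∫ z in (-1 : ℝ)..x, legP n z

/-- `D_{n+1}(x,y) = I_{n+1}(x) I_n(y) - I_n(x) I_{n+1}(y)`, here as a function of `n`. -/
noncomputable def legDR (n : ℕ) (x y : ℝ) : ℝ :=
  legIR (n + 1) x * legIR n y - legIR n x * legIR (n + 1) y

open Polynomial

section Rodrigues

variable {R : Type*} [CommRing R]

theorem iterate_derivative_X_mul (j : ℕ) (p : R[X]) :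
    derivative^[j + 1] (X * p) = X * derivative^[j + 1] p + (j + 1) • derivative^[j] p := by
  rw [mul_comm X p, iterate_derivative_mul_X, Nat.add_sub_cancel, mul_comm]

theorem derivative_X_sq_sub_one_pow_succ (n : ℕ) :
    derivative ((X ^ 2 - 1 : R[X]) ^ (n + 1)) = (2 * n + 2) • (X * (X ^ 2 - 1) ^ n) := by
  rw [derivative_pow_succ, derivative_sub, derivative_X_sq, derivative_one, sub_zero, nsmul_eq_mul]
  simp only [map_add, map_natCast, map_one, C_ofNat]
  push_cast
  ring

theorem derivative_X_mul_X_sq_sub_one_pow_succ (n : ℕ) :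
    derivative (X * (X ^ 2 - 1 : R[X]) ^ (n + 1))
      = (2 * n + 3) • (X ^ 2 - 1) ^ (n + 1) + (2 * n + 2) • (X ^ 2 - 1) ^ n := by
  rw [derivative_mul, derivative_X, derivative_X_sq_sub_one_pow_succ]
  simp only [nsmul_eq_mul]
  push_cast
  ring

theorem iterate_derivative_X_sq_sub_one_pow_succ (n j : ℕ) :
    derivative^[j + 2] ((X ^ 2 - 1 : R[X]) ^ (n + 1))
      = (2 * n + 2) • (X * derivative^[j + 1] ((X ^ 2 - 1) ^ n)
          + (j + 1) • derivative^[j] ((X ^ 2 - 1) ^ n)) := by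
  rw [Function.iterate_succ_apply, derivative_X_sq_sub_one_pow_succ, iterate_derivative_smul,
    iterate_derivative_X_mul]

theorem X_mul_iterate_derivative_X_sq_sub_one_pow_succ (n j : ℕ) :
    X * derivative^[j + 1] ((X ^ 2 - 1 : R[X]) ^ (n + 1))
        + (j + 1) • derivative^[j] ((X ^ 2 - 1) ^ (n + 1))
      = (2 * n + 3) • derivative^[j] ((X ^ 2 - 1) ^ (n + 1))
        + (2 * n + 2) • derivative^[j] ((X ^ 2 - 1) ^ n) := by
  rw [← iterate_derivative_X_mul, Function.iterate_succ_apply,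
    derivative_X_mul_X_sq_sub_one_pow_succ, iterate_map_add, iterate_derivative_smul,
    iterate_derivative_smul]

noncomputable def scaledIntLegendre (n : ℕ) : R[X] := derivative^[n] ((X ^ 2 - 1) ^ (n + 1))

theorem scaledIntLegendre_one : (scaledIntLegendre 1 : R[X]) = 4 * X * scaledIntLegendre 0 := by
  rw [scaledIntLegendre, scaledIntLegendre, Function.iterate_one, Function.iterate_zero_apply,
    derivative_X_sq_sub_one_pow_succ, nsmul_eq_mul]
  push_cast
  ring

theorem scaledIntLegendre_recurrence (n : ℕ) :
    (2 * (n + 3) * (2 * n + 5)) • (X * (scaledIntLegendre (n + 1) : R[X]))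
      = (n + 4) • scaledIntLegendre (n + 2)
        + (4 * (n + 1) * (n + 2) * (n + 3)) • scaledIntLegendre n := by
  have hG := iterate_derivative_X_sq_sub_one_pow_succ (R := R) (n + 2) n
  have hX := X_mul_iterate_derivative_X_sq_sub_one_pow_succ (R := R) (n + 1) n
  simp only [scaledIntLegendre, nsmul_eq_mul] at hG hX ⊢
  push_cast at hG hX ⊢
  -- eliminate `D^[n] ((X ^ 2 - 1) ^ (n + 2))`
  linear_combination (-((n : R[X]) + 4)) * hG + 2 * ((n : R[X]) + 1) * ((n : R[X]) + 3) * hX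

theorem scaledIntLegendre_eval_neg_one (n : ℕ) : (scaledIntLegendre n : R[X]).eval (-1) = 0 := by
  have hdvd : (X + 1 : R[X]) ^ (n + 1) ∣ (X ^ 2 - 1) ^ (n + 1) :=
    pow_dvd_pow_of_dvd ⟨X - 1, by ring⟩ _
  obtain ⟨q, hq⟩ := pow_sub_dvd_iterate_derivative_of_pow_dvd n hdvd
  rw [scaledIntLegendre, hq, Nat.add_sub_cancel_left, pow_one]
  simp

end Rodrigues

theorem Polynomial.iteratedDeriv_eval {𝕜 : Type*} [NontriviallyNormedField 𝕜] (p : 𝕜[X])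
    (k : ℕ) :
    iteratedDeriv k (fun x => p.eval x) = fun x => (derivative^[k] p).eval x := by
  induction k generalizing p with
  | zero => simp
  | succ k ih =>
    rw [iteratedDeriv_succ', Function.iterate_succ_apply, ← ih]
    congr 1
    funext x
    exact p.deriv

theorem legP_eq_eval (n : ℕ) (x : ℝ) :
    legP n x = (derivative^[n] ((X ^ 2 - 1 : ℝ[X]) ^ n)).eval x / (2 ^ n * n.factorial) := by
  have h : (fun y : ℝ => (y ^ 2 - 1) ^ n) = fun y => ((X ^ 2 - 1 : ℝ[X]) ^ n).eval y := by
    simp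
  rw [legP, h, iteratedDeriv_eval]
  ring

theorem legIR_succ_eq_eval (n : ℕ) (x : ℝ) :
    legIR (n + 1) x = (scaledIntLegendre n).eval x / (2 ^ (n + 1) * (n + 1).factorial) := by
  have hP : ∀ z, legP (n + 1) z
      = (derivative (scaledIntLegendre n)).eval z / (2 ^ (n + 1) * (n + 1).factorial) := by
    intro z
    rw [legP_eq_eval, Function.iterate_succ_apply', scaledIntLegendre]
  simp_rw [legIR, hP, intervalIntegral.integral_div]
  rw [intervalIntegral.integral_eq_sub_of_hasDerivAt (fun z _ => (scaledIntLegendre n).hasDerivAt z)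
    ((derivative _).continuous.intervalIntegrable _ _), scaledIntLegendre_eval_neg_one,
    sub_zero]

theorem legIR_recurrence (n : ℕ) (x : ℝ) :
    (2 * n + 3) * x * legIR (n + 1) x = (n + 3) * legIR (n + 2) x + n * legIR n x := by
  cases n with
  | zero =>
    have h := congrArg (eval x) (scaledIntLegendre_one (R := ℝ))
    simp only [eval_mul, eval_ofNat, eval_X] at h
    rw [legIR_succ_eq_eval, legIR_succ_eq_eval, h]
    push_cast [Nat.factorial]
    ring
  | succ m =>
    have h := congrArg (eval x) (scaledIntLegendre_recurrence (R := ℝ) m)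
    simp only [nsmul_eq_mul, eval_add, eval_mul, eval_X, eval_natCast] at h
    rw [legIR_succ_eq_eval, legIR_succ_eq_eval, legIR_succ_eq_eval]
    simp only [Nat.factorial_succ, pow_succ]
    push_cast at h ⊢
    field_simp
    linear_combination h

theorem sub_mul_legIR_mul_legIR (n : ℕ) (x y : ℝ) :
    (x - y) * ((2 * n + 3) * legIR (n + 1) x * legIR (n + 1) y)
      = (n + 3) * legDR (n + 1) x y - n * legDR n x y := by
  have hx := legIR_recurrence n x
  have hy := legIR_recurrence n y
  unfold legDR
  linear_combination legIR (n + 1) y * hx - legIR (n + 1) x * hy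

theorem statement_17_general (x y : ℝ) (N : ℕ) :
    (x - y) * ∑ n ∈ Finset.Icc 1 N, (2 * (n : ℝ) + 1) * legIR n x * legIR n y
      = (N : ℝ) * legDR N x y + 2 * ∑ n ∈ Finset.Icc 1 N, legDR n x y := by
  induction N with
  | zero => simp
  | succ N ih =>
    rw [sum_Icc_succ_top (by omega), sum_Icc_succ_top (by omega)]
    have h := sub_mul_legIR_mul_legIR N x y
    push_cast at h ⊢
    linear_combination ih + h

theorem statement_17 (x y : ℝ) (hx : x ∈ Set.Icc (-1 : ℝ) 1) (hy : y ∈ Set.Icc (-1 : ℝ) 1)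
    (N : ℕ) (hN : 1 ≤ N) :
    (x - y) * ∑ n ∈ Finset.Icc 1 N, (2 * (n : ℝ) + 1) * legIR n x * legIR n y
      = (N : ℝ) * legDR N x y + 2 * ∑ n ∈ Finset.Icc 1 N, legDR n x y :=
  statement_17_general x y N
end

section
/- Fix x, y ∈ [−1,1] and α ∈ ℝ with α < 1. Then for every N ∈ ℕ the series Σ_{n=N}^∞ (2n+1)·I_n(x)·I_n(y) converges, and lim_{N→∞} (x−y)·N^{α+1}·Σ_{n=N}^∞ (2n+1)·I_n(x)·I_n(y) = 0, where I_n(x) = ∫_{−1}^x P_n(z) dz. -/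
open Filter

open Polynomial intervalIntegral MeasureTheory

namespace Leg

noncomputable def u (n : ℕ) : ℝ[X] := ((X:ℝ[X])^2 - 1)^n

noncomputable def cL (n : ℕ) : ℝ := 1/(2^n * n.factorial)

noncomputable def L (n : ℕ) : ℝ[X] := C (cL n) * derivative^[n] (u n)

lemma itadd (k : ℕ) (p q : ℝ[X]) :
    derivative^[k] (p + q) = derivative^[k] p + derivative^[k] q := by
  induction k generalizing p q with
  | zero => simp
  | succ k ih =>
    rw [Function.iterate_succ_apply, derivative_add, ih]
    simp only [Function.iterate_succ_apply]

lemma hXlem (p : ℝ[X]) : ∀ k : ℕ, derivative^[k+1] (X * p) =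
    X * derivative^[k+1] p + ((k:ℝ[X])+1) * derivative^[k] p := by
  intro k
  induction k generalizing p with
  | zero => simp [derivative_mul]; ring
  | succ k ih =>
    rw [Function.iterate_succ_apply (f := (⇑derivative : ℝ[X] → ℝ[X])) (n := k+1),
      derivative_mul, derivative_X, one_mul, itadd, ih (derivative p)]
    simp only [Function.iterate_succ_apply]
    push_cast
    ring

lemma hXXlem (p : ℝ[X]) : ∀ k : ℕ, derivative^[k+2] (((X:ℝ[X])^2-1) * p) =
    ((X:ℝ[X])^2-1) * derivative^[k+2] p + (2*((k:ℝ[X])+2)) * (X * derivative^[k+1] p)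
      + (((k:ℝ[X])+2)*((k:ℝ[X])+1)) * derivative^[k] p := by
  intro k
  have h1 : derivative (((X:ℝ[X])^2 - 1)) = 2*X := by
    simp [derivative_X_pow, map_ofNat]
    norm_num
  induction k generalizing p with
  | zero =>
    simp only [Function.iterate_succ_apply, Function.iterate_zero_apply]
    simp [derivative_mul, map_ofNat]
    ring
  | succ k ih =>
    rw [Function.iterate_succ_apply (f := (⇑derivative : ℝ[X] → ℝ[X])) (n := k+2),
      derivative_mul, h1, itadd, ih (derivative p),
      show (2*(X:ℝ[X]))*p = X * (2*p) by ring, hXlem (2*p) (k+1)]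
    have h2 : ∀ j : ℕ, derivative^[j] ((2:ℝ[X]) * p) = 2 * derivative^[j] p := by
      intro j
      have := Polynomial.iterate_derivative_C_mul (2:ℝ) p j
      simpa [map_ofNat] using this
    rw [h2, h2]
    simp only [Function.iterate_succ_apply]
    push_cast
    ring

lemma cL_pos (n : ℕ) : 0 < cL n := by
  unfold cL
  have h : (0:ℝ) < n.factorial := by exact_mod_cast n.factorial_pos
  positivity

lemma Cnat (n : ℕ) : (C (2*((n:ℝ)+1)) : ℝ[X]) = 2*((n:ℝ[X])+1) := by
  rw [map_mul, map_ofNat, map_add, map_natCast, map_one]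

lemma cL_succ (n : ℕ) : cL (n+1) * (2*((n:ℝ)+1)) = cL n := by
  unfold cL
  rw [Nat.factorial_succ]
  have h1 : (n.factorial : ℝ) ≠ 0 := by positivity
  have h2 : (2:ℝ)^n ≠ 0 := by positivity
  push_cast
  field_simp
  ring

lemma cL_poly (n : ℕ) : (C (cL n) : ℝ[X]) = C (cL (n+1)) * (2*((n:ℝ[X])+1)) := by
  rw [← Cnat, ← map_mul]
  congr 1
  rw [← cL_succ]

lemma dL (n : ℕ) : derivative (L n) = C (cL n) * derivative^[n+1] (u n) := by
  rw [L, derivative_C_mul, Function.iterate_succ_apply']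

lemma ddL (n : ℕ) : derivative (derivative (L n)) = C (cL n) * derivative^[n+2] (u n) := by
  rw [dL, derivative_C_mul, Function.iterate_succ_apply' (⇑derivative) (n+1)]

lemma du_succ (n : ℕ) : derivative (u (n+1)) = (2*((n:ℝ[X])+1)) * (X * u n) := by
  unfold u
  rw [derivative_pow]
  have h1 : derivative (((X:ℝ[X])^2 - 1)) = 2*X := by
    simp [derivative_X_pow, map_ofNat]
    norm_num
  rw [h1, map_natCast]
  push_cast
  ring

lemma it_cmul (a : ℝ) (k : ℕ) (p : ℝ[X]) :
    derivative^[k] (C a * p) = C a * derivative^[k] p :=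
  Polynomial.iterate_derivative_C_mul a p k

lemma it_nmul (n : ℕ) (k : ℕ) (p : ℝ[X]) :
    derivative^[k] ((2*((n:ℝ[X])+1)) * p) = (2*((n:ℝ[X])+1)) * derivative^[k] p := by
  rw [← Cnat, it_cmul]

lemma ladder1 (n : ℕ) : derivative (L (n+1)) =
    X * derivative (L n) + ((n:ℝ[X])+1) * L n := by
  have key : derivative^[n+1+1] (u (n+1)) = derivative^[n+1] (derivative (u (n+1))) := by
    rw [← Function.iterate_succ_apply]
  rw [dL (n+1), dL n, key, du_succ, it_nmul, hXlem]
  simp only [L]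
  rw [cL_poly n]
  ring

lemma ode (n : ℕ) : ((X:ℝ[X])^2-1) * derivative (derivative (L n))
    + 2*(X * derivative (L n)) = ((n:ℝ[X])*((n:ℝ[X])+1)) * L n := by
  induction n with
  | zero => simp [L, u]
  | succ n _ =>
    have pre : ((X:ℝ[X])^2-1) * derivative (u (n+1))
        = (2*((n:ℝ[X])+1)) * (X * u (n+1)) := by
      rw [du_succ]
      have h2 : (X:ℝ[X]) * u (n+1) = ((X:ℝ[X])^2-1) * (X * u n) := by
        unfold u; ring
      rw [h2]; ring
    have pre2 := congrArg (derivative^[n+2]) pre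
    rw [hXXlem, it_nmul, hXlem] at pre2
    have e1 : derivative^[n] (derivative (u (n+1))) = derivative^[n+1] (u (n+1)) := by
      rw [← Function.iterate_succ_apply]
    have e2 : derivative^[n+1] (derivative (u (n+1))) = derivative^[n+2] (u (n+1)) := by
      rw [← Function.iterate_succ_apply]
    have e3 : derivative^[n+2] (derivative (u (n+1))) = derivative^[n+3] (u (n+1)) := by
      rw [← Function.iterate_succ_apply]
    rw [e1, e2, e3] at pre2
    rw [ddL (n+1), dL (n+1)]
    simp only [L]
    push_cast at pre2 ⊢
    linear_combination (C (cL (n+1))) * pre2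

lemma ladder_d2 (n : ℕ) : derivative (derivative (L (n+1))) =
    X * derivative (derivative (L n)) + ((n:ℝ[X])+2) * derivative (L n) := by
  have h := congrArg derivative (ladder1 n)
  rw [derivative_add, derivative_mul, derivative_mul, derivative_X] at h
  have hz : derivative ((n:ℝ[X])+1) = 0 := by
    rw [derivative_add, derivative_natCast, derivative_one, add_zero]
  rw [hz] at h
  rw [h]; ring

lemma natCast_poly_ne (n m : ℕ) (hm : 0 < m) : ((n:ℝ[X]) + (m:ℝ[X])) ≠ 0 := by
  have : ((n:ℝ[X]) + (m:ℝ[X])) = ((n+m : ℕ) : ℝ[X]) := by push_cast; ring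
  rw [this]
  exact Nat.cast_ne_zero.mpr (by omega)

lemma identG (n : ℕ) : ((X:ℝ[X])^2-1) * derivative (L n) =
    ((n:ℝ[X])+1) * (L (n+1) - X * L n) := by
  have h2 : ((n:ℝ[X])+2) ≠ 0 := by
    have := natCast_poly_ne n 2 (by norm_num)
    simpa using this
  apply mul_left_cancel₀ h2
  have h1 := ladder1 n
  have hd2 := ladder_d2 n
  have ho := ode n
  have ho1 := ode (n+1)
  push_cast at ho1
  linear_combination ho1 - (((X:ℝ[X])^2-1)) * hd2 - (2*(X:ℝ[X])) * h1 - (X:ℝ[X]) * ho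

lemma ladder2 (n : ℕ) : derivative (L n) =
    X * derivative (L (n+1)) - ((n:ℝ[X])+1) * L (n+1) := by
  linear_combination (-(X:ℝ[X])) * ladder1 n - identG n

lemma CD (n : ℕ) : (2*(n:ℝ[X])+3) * (X * derivative (L (n+1))) =
    ((n:ℝ[X])+1) * derivative (L (n+2)) + ((n:ℝ[X])+2) * derivative (L n) := by
  have h1 := ladder1 (n+1)
  have h2 := ladder2 n
  push_cast at h1
  linear_combination (-((n:ℝ[X])+1)) * h1 - ((n:ℝ[X])+2) * h2

lemma evalIter (k : ℕ) (p : ℝ[X]) :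
    iteratedDeriv k (fun t : ℝ => p.eval t) = fun t => (derivative^[k] p).eval t := by
  induction k with
  | zero => simp
  | succ k ih =>
    rw [iteratedDeriv_succ, ih, Function.iterate_succ_apply']
    funext t
    exact Polynomial.deriv _

lemma legP_eq (n : ℕ) (x : ℝ) : legP n x = (L n).eval x := by
  have h : (fun y : ℝ => (y ^ 2 - 1) ^ n) = fun t : ℝ => (u n).eval t := by
    funext t; simp [u]
  rw [legP, h, evalIter, L, eval_mul, eval_C, cL]

/-- the antiderivative identity -/
lemma dF (n : ℕ) : derivative (((X:ℝ[X])^2-1) * derivative (L n))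
    = ((n:ℝ[X])*((n:ℝ[X])+1)) * L n := by
  rw [derivative_mul]
  have h1 : derivative (((X:ℝ[X])^2 - 1)) = 2*X := by
    simp [derivative_X_pow, map_ofNat]
    norm_num
  rw [h1]
  linear_combination ode n

lemma legIR_eq (n : ℕ) (x : ℝ) : legIR (n+1) x =
    ((x^2-1) * (derivative (L (n+1))).eval x) / (((n:ℝ)+1)*((n:ℝ)+2)) := by
  have hlam : (0:ℝ) < ((n:ℝ)+1)*((n:ℝ)+2) := by positivity
  set F : ℝ → ℝ := fun t => ((((X:ℝ[X])^2-1) * derivative (L (n+1)))).eval t with hF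
  have hd : ∀ t ∈ Set.uIcc (-1:ℝ) x, HasDerivAt F ((((n:ℝ)+1)*((n:ℝ)+2)) * legP (n+1) t) t := by
    intro t _
    have := Polynomial.hasDerivAt (((X:ℝ[X])^2-1) * derivative (L (n+1))) t
    rw [dF (n+1)] at this
    simp only [eval_mul, eval_add, eval_natCast, eval_one, eval_mul] at this
    rw [legP_eq]
    simp only [hF, eval_mul]
    rw [show ((n:ℝ)+1)*((n:ℝ)+2) * eval t (L (n+1))
      = ((n:ℝ)+1)*(((n:ℝ)+1)+1) * eval t (L (n+1)) by ring]
    push_cast at this ⊢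
    exact this
  have hint : IntervalIntegrable (fun t => (((n:ℝ)+1)*((n:ℝ)+2)) * legP (n+1) t)
      MeasureTheory.volume (-1) x := by
    apply Continuous.intervalIntegrable
    have : Continuous (legP (n+1)) := by
      have : legP (n+1) = fun t => (L (n+1)).eval t := by
        funext t; exact legP_eq _ _
      rw [this]; exact Polynomial.continuous _
    fun_prop
  have key := intervalIntegral.integral_eq_sub_of_hasDerivAt hd hint
  rw [intervalIntegral.integral_const_mul] at key
  have hF1 : F (-1) = 0 := by simp [hF]
  rw [hF1, sub_zero] at key
  simp only [hF, eval_mul, eval_sub, eval_pow, eval_one, eval_X] at key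
  rw [legIR, eq_div_iff hlam.ne']
  linarith [key]

lemma boundary (n j : ℕ) (hj : j < n) (t : ℝ) (ht : t^2 = 1) :
    (derivative^[j] (u n)).eval t = 0 := by
  have hd : ((X:ℝ[X])^2-1)^(n-j) ∣ derivative^[j] (u n) :=
    Polynomial.pow_sub_dvd_iterate_derivative_pow _ n j
  obtain ⟨q, hq⟩ := hd
  rw [hq]
  have h1 : n - j = (n - j - 1) + 1 := by omega
  rw [h1, pow_succ]
  simp [ht]

lemma contEval (p : ℝ[X]) : Continuous (fun t : ℝ => p.eval t) := Polynomial.continuous_aeval p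

lemma ibp_chain (n : ℕ) : ∀ k, k ≤ n →
    (∫ t in (-1:ℝ)..1, (derivative^[n-k] (u n)).eval t * (derivative^[n+k] (u n)).eval t)
    = (-1:ℝ)^k * ∫ t in (-1:ℝ)..1, ((derivative^[n] (u n)).eval t)^2 := by
  intro k
  induction k with
  | zero => simp [pow_two]
  | succ k ih =>
    intro hk
    have hk' : k ≤ n := by omega
    have e1 : n - k = (n - (k+1)) + 1 := by omega
    have hu : ∀ s ∈ Set.uIcc (-1:ℝ) 1, HasDerivAt (fun t => (derivative^[n-(k+1)] (u n)).eval t)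
        ((derivative^[n-k] (u n)).eval s) s := by
      intro s _
      rw [e1, Function.iterate_succ_apply']
      exact Polynomial.hasDerivAt _ s
    have hv : ∀ s ∈ Set.uIcc (-1:ℝ) 1, HasDerivAt (fun t => (derivative^[n+k] (u n)).eval t)
        ((derivative^[n+k+1] (u n)).eval s) s := by
      intro s _
      rw [Function.iterate_succ_apply']
      exact Polynomial.hasDerivAt _ s
    have key := intervalIntegral.integral_mul_deriv_eq_deriv_mul hu hv
      ((contEval _).intervalIntegrable _ _) ((contEval _).intervalIntegrable _ _)
    have b1 : (derivative^[n-(k+1)] (u n)).eval 1 = 0 := boundary n _ (by omega) 1 (by norm_num)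
    have b2 : (derivative^[n-(k+1)] (u n)).eval (-1) = 0 := boundary n _ (by omega) (-1) (by norm_num)
    rw [b1, b2] at key
    simp only [zero_mul, sub_zero, zero_sub] at key
    have e2 : n + (k+1) = (n+k)+1 := by omega
    rw [e2, key, ih hk']
    ring

lemma u_monic (n : ℕ) : (u n).Monic := by
  have h : ((X:ℝ[X])^2 - 1).Monic := by
    have := Polynomial.monic_X_pow_sub_C (1:ℝ) (n := 2) (by norm_num)
    simpa using this
  exact h.pow n

lemma u_natDegree (n : ℕ) : (u n).natDegree = 2*n := by
  have h : ((X:ℝ[X])^2 - 1).natDegree = 2 := by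
    have : ((X:ℝ[X])^2 - 1) = X^2 - C 1 := by simp
    rw [this, Polynomial.natDegree_X_pow_sub_C]
  rw [u, Polynomial.natDegree_pow, h]; ring

lemma top_deriv (n : ℕ) : derivative^[2*n] (u n) = C (((2*n).factorial : ℝ)) := by
  have hdeg : (derivative^[2*n] (u n)).natDegree = 0 := by
    have := Polynomial.natDegree_iterate_derivative (u n) (2*n)
    rw [u_natDegree] at this
    omega
  have hc := Polynomial.eq_C_of_natDegree_le_zero (le_of_eq hdeg)
  rw [hc]
  congr 1
  have hco : ((derivative^[2*n] (u n)).coeff 0)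
      = (0 + 2*n).descFactorial (2*n) • (u n).coeff (0 + 2*n) :=
    Polynomial.coeff_iterate_derivative (u n) 0
  have hlc : (u n).coeff (2*n) = 1 := by
    have := (u_monic n).leadingCoeff
    rwa [Polynomial.leadingCoeff, u_natDegree] at this
  rw [hco]
  simp [hlc, Nat.descFactorial_self]

noncomputable def Jint (n : ℕ) : ℝ := ∫ t in (-1:ℝ)..1, (1-t^2)^n

lemma Jint_eq (n : ℕ) : Jint n = 2 * ∏ i ∈ Finset.range n, (2*(i:ℝ)+2)/(2*i+3) := by
  have subst := intervalIntegral.integral_comp_smul_deriv (a := (0:ℝ)) (b := Real.pi)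
    (f := Real.cos) (f' := fun t => -Real.sin t) (g := fun t : ℝ => (1-t^2)^n)
    (fun t _ => (Real.hasDerivAt_cos t)) (by fun_prop) (by fun_prop)
  rw [Real.cos_zero, Real.cos_pi] at subst
  have h1 : (∫ t in (0:ℝ)..Real.pi, (-Real.sin t) • ((fun t : ℝ => (1-t^2)^n) ∘ Real.cos) t)
      = -∫ t in (0:ℝ)..Real.pi, Real.sin t ^ (2*n+1) := by
    rw [← intervalIntegral.integral_neg]
    congr 1
    funext t
    simp only [Function.comp_apply, smul_eq_mul]
    have : 1 - Real.cos t^2 = Real.sin t^2 := by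
      have := Real.sin_sq_add_cos_sq t; linarith
    rw [this]
    ring
  rw [h1] at subst
  have h2 : (∫ t in (1:ℝ)..(-1), (1-t^2)^n) = - Jint n := by
    rw [Jint, intervalIntegral.integral_symm]
  rw [h2] at subst
  have := integral_sin_pow_odd (n := n)
  rw [this] at subst
  linarith [subst]

lemma norm_num_id (n : ℕ) : (cL n)^2 * ((2*n).factorial : ℝ) * Jint n = 2/(2*(n:ℝ)+1) := by
  induction n with
  | zero => simp [cL, Jint_eq]
  | succ n ih =>
    have hJ : Jint (n+1) = Jint n * ((2*(n:ℝ)+2)/(2*n+3)) := by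
      rw [Jint_eq, Jint_eq, Finset.prod_range_succ]
      push_cast
      ring
    have hcL : cL (n+1) = cL n / (2*((n:ℝ)+1)) := by
      rw [← cL_succ n]
      field_simp
    have hfac : (((2*(n+1)).factorial : ℕ) : ℝ)
        = (2*(n:ℝ)+2) * ((2*(n:ℝ)+1) * ((2*n).factorial : ℝ)) := by
      have : 2*(n+1) = (2*n+1)+1 := by omega
      rw [this, Nat.factorial_succ, Nat.factorial_succ]
      push_cast
      ring
    rw [hJ, hcL, hfac]
    have h1 : (2*(n:ℝ)+1) ≠ 0 := by positivity
    have h2 : (2*(n:ℝ)+3) ≠ 0 := by positivity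
    have h3 : ((n:ℝ)+1) ≠ 0 := by positivity
    have hJn : Jint n = (2/(2*(n:ℝ)+1)) / ((cL n)^2 * ((2*n).factorial : ℝ)) := by
      rw [← ih]
      have hc : cL n ≠ 0 := by
        have : (0:ℝ) < cL n := by
          unfold cL
          have h : (0:ℝ) < n.factorial := by exact_mod_cast n.factorial_pos
          positivity
        positivity
      have hf : ((2*n).factorial : ℝ) ≠ 0 := by positivity
      field_simp
    rw [hJn]
    have hc : cL n ≠ 0 := by
      have : (0:ℝ) < cL n := by
        unfold cL
        have h : (0:ℝ) < n.factorial := by exact_mod_cast n.factorial_pos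
        positivity
      positivity
    have hf : ((2*n).factorial : ℝ) ≠ 0 := by positivity
    field_simp
    push_cast
    ring

lemma norm_L (n : ℕ) : (∫ t in (-1:ℝ)..1, ((L n).eval t)^2) = 2/(2*(n:ℝ)+1) := by
  have chain := ibp_chain n n le_rfl
  rw [Nat.sub_self] at chain
  have e : n + n = 2*n := by omega
  rw [e, top_deriv] at chain
  have hu : (∫ t in (-1:ℝ)..1, (derivative^[0] (u n)).eval t * ((2*n).factorial : ℝ))
      = ((2*n).factorial : ℝ) * ((-1:ℝ)^n * Jint n) := by
    simp only [Function.iterate_zero_apply]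
    rw [intervalIntegral.integral_mul_const]
    have : (∫ t in (-1:ℝ)..1, (u n).eval t) = (-1:ℝ)^n * Jint n := by
      rw [Jint, ← intervalIntegral.integral_const_mul]
      congr 1
      funext t
      simp only [u, eval_pow, eval_sub, eval_one, eval_pow, eval_X]
      rw [← mul_pow]
      ring_nf
    rw [this]
    ring
  simp only [eval_C] at chain
  rw [hu] at chain
  have key : (∫ t in (-1:ℝ)..1, ((derivative^[n] (u n)).eval t)^2)
      = ((2*n).factorial : ℝ) * Jint n := by
    have h4 : ((-1:ℝ)^n) * ((-1:ℝ)^n) = 1 := by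
      rw [← pow_add, ← two_mul, pow_mul]
      norm_num
    linear_combination (-((-1:ℝ)^n)) * chain
      + (((2*n).factorial : ℝ) * Jint n
        - (∫ t in (-1:ℝ)..1, ((derivative^[n] (u n)).eval t)^2)) * h4
  have : (fun t : ℝ => ((L n).eval t)^2) = fun t => (cL n)^2 * ((derivative^[n] (u n)).eval t)^2 := by
    funext t
    simp [L]
    ring
  rw [this, intervalIntegral.integral_const_mul, key, ← norm_num_id n]
  ring

lemma Pd_sq_bound (n : ℕ) (t : ℝ) (ht : t ∈ Set.Icc (-1:ℝ) 1) :
    ((1 - t^2) * (derivative (L n)).eval t)^2 ≤ 2*((n:ℝ)+1) := by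
  obtain ⟨ht1, ht2⟩ := ht
  rcases Nat.eq_zero_or_pos n with hn | hn
  · subst hn
    have : derivative (L 0) = 0 := by
      simp [L, u]
    rw [this]
    norm_num
  -- main case
  set lam : ℝ := (n:ℝ)*((n:ℝ)+1) with hlam
  have lam_pos : 0 < lam := by
    have : (1:ℝ) ≤ (n:ℝ) := by exact_mod_cast hn
    rw [hlam]; nlinarith
  set Sp : ℝ[X] := C lam * (((1:ℝ[X])-X^2) * (L n)^2) + ((1:ℝ[X])-X^2)^2 * (derivative (L n))^2
    with hSp
  have h1 : derivative ((1:ℝ[X]) - X^2) = -(2*X) := by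
    simp [derivative_X_pow, map_ofNat]
    norm_num
  have dSp : derivative Sp = C lam * ((-2)*X) * (L n)^2 := by
    rw [hSp]
    rw [derivative_add, derivative_C_mul, derivative_mul, derivative_mul, h1,
      derivative_pow, derivative_pow, derivative_pow, h1]
    have hC : (C lam : ℝ[X]) = (n:ℝ[X])*((n:ℝ[X])+1) := by
      rw [hlam, map_mul, map_add, map_natCast, map_one]
    rw [hC]
    simp only [Nat.cast_ofNat, map_ofNat]
    push_cast
    linear_combination (-(2*((1:ℝ[X])-X^2)) * derivative (L n)) * ode n
  set Sf : ℝ → ℝ := fun s => Sp.eval s with hSf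
  set Pf : ℝ → ℝ := fun s => (L n).eval s with hPf
  have hS' : ∀ s : ℝ, HasDerivAt Sf (lam * (-2*s) * (Pf s)^2) s := by
    intro s
    have h := Polynomial.hasDerivAt Sp s
    rw [dSp] at h
    have he : eval s (C lam * (-2*X) * (L n)^2) = lam * (-2*s) * (Pf s)^2 := by
      simp [hPf]
    rwa [he] at h
  have contPf : Continuous Pf := by rw [hPf]; exact Polynomial.continuous _
  have contInt : ∀ a b : ℝ, IntervalIntegrable (fun s => lam * (-2*s) * (Pf s)^2) volume a b := by
    intro a b
    apply Continuous.intervalIntegrable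
    fun_prop
  have hg_int : ∀ a b : ℝ, IntervalIntegrable (fun s => 2*lam*(Pf s)^2) volume a b := by
    intro a b
    apply Continuous.intervalIntegrable
    fun_prop
  have hnorm : (∫ s in (-1:ℝ)..1, 2*lam*(Pf s)^2) = 2*lam * (2/(2*(n:ℝ)+1)) := by
    simp only [hPf]
    rw [intervalIntegral.integral_const_mul, norm_L n]
  have hsplit : (∫ s in (-1:ℝ)..t, 2*lam*(Pf s)^2) + (∫ s in t..1, 2*lam*(Pf s)^2)
      = ∫ s in (-1:ℝ)..1, 2*lam*(Pf s)^2 :=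
    intervalIntegral.integral_add_adjacent_intervals (hg_int _ _) (hg_int _ _)
  have hpos1 : 0 ≤ ∫ s in (-1:ℝ)..t, 2*lam*(Pf s)^2 := by
    apply intervalIntegral.integral_nonneg ht1
    intro s _
    positivity
  have hpos2 : 0 ≤ ∫ s in t..(1:ℝ), 2*lam*(Pf s)^2 := by
    apply intervalIntegral.integral_nonneg ht2
    intro s _
    positivity
  have Sbound : Sf t ≤ 2*lam * (2/(2*(n:ℝ)+1)) := by
    rcases le_total 0 t with h0 | h0
    · -- t ∈ [0,1]
      have key := intervalIntegral.integral_eq_sub_of_hasDerivAt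
        (f := Sf) (f' := fun s => lam * (-2*s) * (Pf s)^2)
        (a := t) (b := 1) (fun s _ => hS' s) (contInt t 1)
      have hSf1 : Sf 1 = 0 := by simp [hSf, hSp]
      rw [hSf1] at key
      -- Sf t = ∫ s in t..1, 2 lam s Pf^2
      have e1 : Sf t = ∫ s in t..(1:ℝ), (2*lam*s)*(Pf s)^2 := by
        have : (∫ s in t..(1:ℝ), (2*lam*s)*(Pf s)^2)
            = - ∫ s in t..(1:ℝ), lam * (-2*s) * (Pf s)^2 := by
          rw [← intervalIntegral.integral_neg]
          congr 1; funext s; ring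
        rw [this, key]; ring
      rw [e1]
      calc (∫ s in t..(1:ℝ), (2*lam*s)*(Pf s)^2)
          ≤ ∫ s in t..(1:ℝ), 2*lam*(Pf s)^2 := by
            apply intervalIntegral.integral_mono_on ht2 (by
              apply Continuous.intervalIntegrable; fun_prop) (hg_int _ _)
            intro s hs
            have hs1 : s ≤ 1 := hs.2
            have hs0 : 0 ≤ s := le_trans h0 hs.1
            nlinarith [mul_nonneg (mul_nonneg (by linarith : (0:ℝ) ≤ 2*lam)
              (by linarith : (0:ℝ) ≤ 1 - s)) (sq_nonneg (Pf s))]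
        _ ≤ 2*lam * (2/(2*(n:ℝ)+1)) := by
            rw [← hnorm, ← hsplit]
            linarith
    · -- t ∈ [-1,0]
      have key := intervalIntegral.integral_eq_sub_of_hasDerivAt
        (f := Sf) (f' := fun s => lam * (-2*s) * (Pf s)^2)
        (a := (-1:ℝ)) (b := t) (fun s _ => hS' s) (contInt _ _)
      have hSfm1 : Sf (-1) = 0 := by simp [hSf, hSp]
      rw [hSfm1, sub_zero] at key
      have e1 : Sf t = ∫ s in (-1:ℝ)..t, (-(2*lam*s))*(Pf s)^2 := by
        rw [← key]
        congr 1; funext s; ring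
      rw [e1]
      calc (∫ s in (-1:ℝ)..t, (-(2*lam*s))*(Pf s)^2)
          ≤ ∫ s in (-1:ℝ)..t, 2*lam*(Pf s)^2 := by
            apply intervalIntegral.integral_mono_on ht1 (by
              apply Continuous.intervalIntegrable; fun_prop) (hg_int _ _)
            intro s hs
            have hs1 : -1 ≤ s := hs.1
            have hs0 : s ≤ 0 := le_trans hs.2 h0
            nlinarith [mul_nonneg (mul_nonneg (by linarith : (0:ℝ) ≤ 2*lam)
              (by linarith : (0:ℝ) ≤ 1 + s)) (sq_nonneg (Pf s))]
        _ ≤ 2*lam * (2/(2*(n:ℝ)+1)) := by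
            rw [← hnorm, ← hsplit]
            linarith
  -- extract
  have hle : ((1 - t^2) * (derivative (L n)).eval t)^2 ≤ Sf t := by
    have hexp : Sf t = lam * ((1-t^2) * (Pf t)^2) + ((1-t^2) * (derivative (L n)).eval t)^2 := by
      simp [hSf, hSp, hPf, eval_mul, eval_pow, eval_add, eval_sub, eval_one]
      ring
    rw [hexp]
    have h1t : 0 ≤ 1 - t^2 := by nlinarith
    nlinarith [mul_nonneg (mul_nonneg lam_pos.le h1t) (sq_nonneg (Pf t))]
  have hfinal : 2*lam * (2/(2*(n:ℝ)+1)) ≤ 2*((n:ℝ)+1) := by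
    rw [hlam]
    have hpos : (0:ℝ) < 2*(n:ℝ)+1 := by positivity
    rw [show 2*((n:ℝ)*((n:ℝ)+1)) * (2/(2*(n:ℝ)+1)) = (4*(n:ℝ)*((n:ℝ)+1))/(2*(n:ℝ)+1) by ring,
      div_le_iff₀ hpos]
    nlinarith [Nat.cast_nonneg (α := ℝ) n]
  linarith

end Leg

open Leg

theorem statement_18 (x y : ℝ) (hx : x ∈ Set.Icc (-1 : ℝ) 1) (hy : y ∈ Set.Icc (-1 : ℝ) 1)
    (α : ℝ) (hα : α < 1) :
    (∀ N : ℕ,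
      Summable (fun n : ℕ => (2 * ((n + N : ℕ) : ℝ) + 1) * legIR (n + N) x * legIR (n + N) y)) ∧
    Tendsto (fun N : ℕ => (x - y) * (N : ℝ) ^ (α + 1) *
        ∑' n : ℕ, (2 * ((n + N : ℕ) : ℝ) + 1) * legIR (n + N) x * legIR (n + N) y)
      atTop (nhds 0) := by
  classical
  set T : ℕ → ℝ := fun m => (2*(m:ℝ)+1) * legIR m x * legIR m y with hT
  have hTN : ∀ N : ℕ, (fun n : ℕ => (2 * ((n + N : ℕ) : ℝ) + 1) * legIR (n + N) x * legIR (n + N) y)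
      = fun n => T (n + N) := by
    intro N; funext n; rw [hT]
  set A : ℕ → ℝ := fun m => (1-x^2) * (derivative (L m)).eval x with hA
  set B : ℕ → ℝ := fun m => (1-y^2) * (derivative (L m)).eval y with hB
  have hAb : ∀ m : ℕ, |A m| ≤ Real.sqrt (2*(m:ℝ)+2) := by
    intro m
    rw [← Real.sqrt_sq_eq_abs]
    apply Real.sqrt_le_sqrt
    have := Pd_sq_bound m x hx
    simp only [hA]; linarith
  have hBb : ∀ m : ℕ, |B m| ≤ Real.sqrt (2*(m:ℝ)+2) := by
    intro m
    rw [← Real.sqrt_sq_eq_abs]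
    apply Real.sqrt_le_sqrt
    have := Pd_sq_bound m y hy
    simp only [hB]; linarith
  have habs2 : ∀ (a c r : ℝ), 0 ≤ r → |a| ≤ Real.sqrt r → |c| ≤ Real.sqrt r → |a*c| ≤ r := by
    intro a c r hr ha hc
    rw [abs_mul]
    calc |a| * |c| ≤ Real.sqrt r * Real.sqrt r :=
          mul_le_mul ha hc (abs_nonneg _) (Real.sqrt_nonneg _)
      _ = r := Real.mul_self_sqrt hr
  have hAb' : ∀ m : ℕ, |A (m+1)| ≤ Real.sqrt (2*(m:ℝ)+4) := by
    intro m
    have h1 := hAb (m+1)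
    push_cast at h1
    calc |A (m+1)| ≤ Real.sqrt (2*((m:ℝ)+1)+2) := h1
      _ ≤ Real.sqrt (2*(m:ℝ)+4) := by apply Real.sqrt_le_sqrt; linarith
  have hBb' : ∀ m : ℕ, |B (m+1)| ≤ Real.sqrt (2*(m:ℝ)+4) := by
    intro m
    have h1 := hBb (m+1)
    push_cast at h1
    calc |B (m+1)| ≤ Real.sqrt (2*((m:ℝ)+1)+2) := h1
      _ ≤ Real.sqrt (2*(m:ℝ)+4) := by apply Real.sqrt_le_sqrt; linarith
  have hAb'' : ∀ m : ℕ, |A m| ≤ Real.sqrt (2*(m:ℝ)+4) := by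
    intro m
    calc |A m| ≤ Real.sqrt (2*(m:ℝ)+2) := hAb m
      _ ≤ Real.sqrt (2*(m:ℝ)+4) := by apply Real.sqrt_le_sqrt; linarith
  have hBb'' : ∀ m : ℕ, |B m| ≤ Real.sqrt (2*(m:ℝ)+4) := by
    intro m
    calc |B m| ≤ Real.sqrt (2*(m:ℝ)+2) := hBb m
      _ ≤ Real.sqrt (2*(m:ℝ)+4) := by apply Real.sqrt_le_sqrt; linarith
  have hr4 : ∀ m : ℕ, (0:ℝ) ≤ 2*(m:ℝ)+4 := by intro m; positivity
  have hprod1 : ∀ m : ℕ, |A (m+1) * B (m+1)| ≤ 2*(m:ℝ)+4 :=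
    fun m => habs2 _ _ _ (hr4 m) (hAb' m) (hBb' m)
  have hprod2 : ∀ m : ℕ, |A (m+1) * B m| ≤ 2*(m:ℝ)+4 :=
    fun m => habs2 _ _ _ (hr4 m) (hAb' m) (hBb'' m)
  have hprod3 : ∀ m : ℕ, |A m * B (m+1)| ≤ 2*(m:ℝ)+4 :=
    fun m => habs2 _ _ _ (hr4 m) (hAb'' m) (hBb' m)
  -- summability
  have hTbound : ∀ m : ℕ, |T (m+1)| ≤ 4/((m:ℝ)+1)^2 := by
    intro m
    have hIx : legIR (m+1) x = -A (m+1) / (((m:ℝ)+1)*((m:ℝ)+2)) := by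
      rw [legIR_eq, hA]; ring_nf
    have hIy : legIR (m+1) y = -B (m+1) / (((m:ℝ)+1)*((m:ℝ)+2)) := by
      rw [legIR_eq, hB]; ring_nf
    have hTm : T (m+1) = (2*(m:ℝ)+3) * (A (m+1) * B (m+1)) / (((m:ℝ)+1)*((m:ℝ)+2))^2 := by
      simp only [hT]
      rw [hIx, hIy]
      push_cast
      field_simp
      ring
    rw [hTm]
    rw [abs_div, abs_mul]
    have h1 : |(2*(m:ℝ)+3)| = 2*(m:ℝ)+3 := abs_of_pos (by positivity)
    have h2 : |((((m:ℝ)+1)*((m:ℝ)+2))^2)| = (((m:ℝ)+1)*((m:ℝ)+2))^2 := abs_of_pos (by positivity)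
    rw [h1, h2]
    have hAB : |A (m+1) * B (m+1)| ≤ 2*(m:ℝ)+4 := hprod1 m
    rw [div_le_div_iff₀ (by positivity) (by positivity)]
    nlinarith [abs_nonneg (A (m+1) * B (m+1)), Nat.cast_nonneg (α := ℝ) m]
  have hsum4 : Summable (fun m : ℕ => 4/((m:ℝ)+1)^2) := by
    have h := Real.summable_one_div_nat_pow.mpr (le_refl 2)
    have h2 : Summable (fun m : ℕ => 1/(((m:ℕ)+1:ℝ))^2) := by
      have := (summable_nat_add_iff 1).mpr h
      simpa using this
    simpa [div_eq_mul_inv] using h2.mul_left 4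
  have hTsum : Summable T := by
    rw [← summable_nat_add_iff 1]
    apply Summable.of_norm
    apply Summable.of_nonneg_of_le (fun m => norm_nonneg _) _ hsum4
    intro m
    simpa using hTbound m
  have part1 : ∀ N : ℕ, Summable (fun n : ℕ =>
      (2 * ((n + N : ℕ) : ℝ) + 1) * legIR (n + N) x * legIR (n + N) y) := by
    intro N
    rw [hTN N]
    exact (summable_nat_add_iff N).mpr hTsum
  refine ⟨part1, ?_⟩
  -- telescoping structure
  set E : ℕ → ℝ := fun m => (A (m+1) * B m - A m * B (m+1)) / ((m:ℝ)+1) with hE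
  set b : ℕ → ℝ := fun m => 1/((m:ℝ)*((m:ℝ)+1)) with hb
  have hEbound : ∀ m : ℕ, |E m| ≤ 8 := by
    intro m
    simp only [hE]
    rw [abs_div, abs_of_pos (show (0:ℝ) < (m:ℝ)+1 by positivity)]
    rw [div_le_iff₀ (by positivity)]
    calc |A (m+1) * B m - A m * B (m+1)| ≤ |A (m+1) * B m| + |A m * B (m+1)| := abs_sub _ _
      _ ≤ (2*(m:ℝ)+4) + (2*(m:ℝ)+4) := add_le_add (hprod2 m) (hprod3 m)
      _ ≤ 8 * ((m:ℝ)+1) := by linarith [Nat.cast_nonneg (α := ℝ) m]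
  have TI : ∀ m : ℕ, (x-y) * T (m+1) = b (m+1) * (E (m+1) - E m) := by
    intro m
    have hIx : legIR (m+1) x = -A (m+1) / (((m:ℝ)+1)*((m:ℝ)+2)) := by
      rw [legIR_eq, hA]; ring_nf
    have hIy : legIR (m+1) y = -B (m+1) / (((m:ℝ)+1)*((m:ℝ)+2)) := by
      rw [legIR_eq, hB]; ring_nf
    have hCdx := congrArg (Polynomial.eval x) (CD m)
    have hCdy := congrArg (Polynomial.eval y) (CD m)
    simp only [eval_mul, eval_add, eval_natCast, eval_ofNat, eval_X, eval_one] at hCdx hCdy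
    have CDA : (2*(m:ℝ)+3) * (x * A (m+1)) = ((m:ℝ)+1) * A (m+2) + ((m:ℝ)+2) * A m := by
      rw [hA]
      push_cast at hCdx
      linear_combination (1-x^2) * hCdx
    have CDB : (2*(m:ℝ)+3) * (y * B (m+1)) = ((m:ℝ)+1) * B (m+2) + ((m:ℝ)+2) * B m := by
      rw [hB]
      push_cast at hCdy
      linear_combination (1-y^2) * hCdy
    have key : (x-y) * ((2*(m:ℝ)+3) * (A (m+1) * B (m+1)))
        = ((m:ℝ)+1) * (A (m+1+1) * B (m+1) - A (m+1) * B (m+1+1))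
          - ((m:ℝ)+2) * (A (m+1) * B m - A m * B (m+1)) := by
      have hidx : m+1+1 = m+2 := rfl
      rw [hidx]
      linear_combination B (m+1) * CDA - A (m+1) * CDB
    simp only [hT, hE, hb]
    rw [hIx, hIy]
    push_cast
    have hm1 : ((m:ℝ)+1) ≠ 0 := by positivity
    have hm2 : ((m:ℝ)+2) ≠ 0 := by positivity
    field_simp
    linear_combination ((m:ℝ)+2)^2 * key
  -- b facts
  have hbpos : ∀ m : ℕ, 0 ≤ b (m+1) := by
    intro m; simp only [hb]; positivity
  have hbdec : ∀ m : ℕ, b (m+2) ≤ b (m+1) := by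
    intro m; simp only [hb]; push_cast
    rw [div_le_div_iff₀ (by positivity) (by positivity)]
    nlinarith [Nat.cast_nonneg (α := ℝ) m]
  have hbmono : ∀ M K : ℕ, b (M+1+K) ≤ b (M+1) := by
    intro M K
    induction K with
    | zero => exact le_refl _
    | succ K ih =>
      have h1 := hbdec (M+K)
      have i1 : M+1+(K+1) = M+K+2 := by omega
      have i2 : M+1+K = M+K+1 := by omega
      rw [i1]
      rw [i2] at ih
      exact h1.trans ih
  -- partial sum bound
  have partial_bound : ∀ M K : ℕ,
      |(x-y) * ∑ k ∈ Finset.range K, T (k+(M+1))| ≤ 24 * b (M+1) := by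
    intro M K
    set c : ℕ → ℝ := fun j => b (M+1+j) with hc
    set e : ℕ → ℝ := fun j => E (M+j) with he
    have TI2 : ∀ k : ℕ, (x-y) * T (k+(M+1)) = c k * (e (k+1) - e k) := by
      intro k
      have i1 : M+1+k = M+k+1 := by omega
      have i2 : M+(k+1) = M+k+1 := by omega
      have i3 : k+(M+1) = M+k+1 := by omega
      calc (x-y) * T (k+(M+1)) = (x-y) * T (M+k+1) := by rw [i3]
        _ = b (M+k+1) * (E (M+k+1) - E (M+k)) := TI (M+k)
        _ = c k * (e (k+1) - e k) := by simp only [hc, he, i1, i2]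
    have hcdec : ∀ k : ℕ, c (k+1) ≤ c k := by
      intro k
      have h1 := hbdec (M+k)
      have i1 : M+1+(k+1) = M+k+2 := by omega
      have i2 : M+1+k = M+k+1 := by omega
      simp only [hc, i1, i2]
      exact h1
    have hcpos : ∀ k : ℕ, 0 ≤ c k := by
      intro k
      have i1 : M+1+k = (M+k)+1 := by omega
      simp only [hc, i1]
      exact hbpos (M+k)
    have hcmono : ∀ k : ℕ, c k ≤ c 0 := by
      intro k
      simp only [hc]
      have := hbmono M k
      simpa using this
    have hebound : ∀ k : ℕ, |e k| ≤ 8 := by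
      intro k; simp only [he]; exact hEbound (M+k)
    have hmulout : (x-y) * ∑ k ∈ Finset.range K, T (k+(M+1))
        = ∑ k ∈ Finset.range K, (x-y) * T (k+(M+1)) := by
      rw [Finset.mul_sum]
    rw [hmulout]
    have hsplit2 : ∑ k ∈ Finset.range K, (x-y) * T (k+(M+1))
        = (∑ k ∈ Finset.range K, (c k - c (k+1)) * e (k+1))
          + (∑ k ∈ Finset.range K, (c (k+1) * e (k+1) - c k * e k)) := by
      rw [← Finset.sum_add_distrib]
      apply Finset.sum_congr rfl
      intro k _
      rw [TI2 k]
      ring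
    rw [hsplit2]
    have htel : ∑ k ∈ Finset.range K, (c (k+1) * e (k+1) - c k * e k)
        = c K * e K - c 0 * e 0 := by
      exact Finset.sum_range_sub (fun k => c k * e k) K
    rw [htel]
    have hpart1 : |∑ k ∈ Finset.range K, (c k - c (k+1)) * e (k+1)| ≤ 8 * c 0 := by
      calc |∑ k ∈ Finset.range K, (c k - c (k+1)) * e (k+1)|
          ≤ ∑ k ∈ Finset.range K, |(c k - c (k+1)) * e (k+1)| :=
            Finset.abs_sum_le_sum_abs _ _
        _ ≤ ∑ k ∈ Finset.range K, (c k - c (k+1)) * 8 := by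
            apply Finset.sum_le_sum
            intro k _
            rw [abs_mul, abs_of_nonneg (by linarith [hcdec k])]
            exact mul_le_mul_of_nonneg_left (hebound (k+1)) (by linarith [hcdec k])
        _ = 8 * (c 0 - c K) := by
            rw [← Finset.sum_mul, Finset.sum_range_sub' c K]
            ring
        _ ≤ 8 * c 0 := by nlinarith [hcpos K]
    have hpart2 : |c K * e K - c 0 * e 0| ≤ 16 * c 0 := by
      calc |c K * e K - c 0 * e 0| ≤ |c K * e K| + |c 0 * e 0| := abs_sub _ _
        _ ≤ c K * 8 + c 0 * 8 := by
            rw [abs_mul, abs_mul, abs_of_nonneg (hcpos K), abs_of_nonneg (hcpos 0)]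
            exact add_le_add (mul_le_mul_of_nonneg_left (hebound K) (hcpos K))
              (mul_le_mul_of_nonneg_left (hebound 0) (hcpos 0))
        _ ≤ 16 * c 0 := by nlinarith [hcmono K, hcpos K]
    have hc0 : c 0 = b (M+1) := by simp only [hc]
    calc |(∑ k ∈ Finset.range K, (c k - c (k+1)) * e (k+1)) + (c K * e K - c 0 * e 0)|
        ≤ |∑ k ∈ Finset.range K, (c k - c (k+1)) * e (k+1)| + |c K * e K - c 0 * e 0| :=
          abs_add_le _ _
      _ ≤ 8 * c 0 + 16 * c 0 := add_le_add hpart1 hpart2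
      _ = 24 * b (M+1) := by rw [← hc0]; ring
  -- tail bound
  have tail_bound : ∀ M : ℕ, |(x-y) * ∑' n, T (n+(M+1))| ≤ 24 * b (M+1) := by
    intro M
    have hs : Summable (fun n => T (n+(M+1))) := (summable_nat_add_iff (M+1)).mpr hTsum
    have ht1 := hs.hasSum.tendsto_sum_nat
    have ht2 : Tendsto (fun K => (x-y) * ∑ k ∈ Finset.range K, T (k+(M+1))) atTop
        (nhds ((x-y) * ∑' n, T (n+(M+1)))) := ht1.const_mul _
    have ht3 := ht2.abs
    exact le_of_tendsto ht3 (Filter.Eventually.of_forall (fun K => partial_bound M K))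
  -- final squeeze
  have hb_le : ∀ M : ℕ, b (M+1) ≤ 1/((M:ℝ)+1)^2 := by
    intro M
    simp only [hb]
    push_cast
    rw [div_le_div_iff₀ (by positivity) (by positivity)]
    nlinarith [Nat.cast_nonneg (α := ℝ) M]
  have hgtend : Tendsto (fun N : ℕ => 24*(N:ℝ)^(α-1)) atTop (nhds 0) := by
    have h1 : Tendsto (fun t : ℝ => t^(α-1)) atTop (nhds 0) := by
      have h2 := tendsto_rpow_neg_atTop (y := 1-α) (by linarith)
      have h3 : (fun t : ℝ => t^(-(1-α))) = fun t : ℝ => t^(α-1) := by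
        funext t; congr 1; ring
      rwa [h3] at h2
    have h4 := h1.comp (tendsto_natCast_atTop_atTop (R := ℝ))
    have h5 := h4.const_mul (24:ℝ)
    simpa using h5
  apply squeeze_zero_norm' _ hgtend
  filter_upwards [eventually_ge_atTop 1] with N hN
  obtain ⟨M, rfl⟩ : ∃ M, N = M+1 := ⟨N-1, by omega⟩
  have htsum_eq : (∑' n : ℕ, (2 * ((n + (M+1) : ℕ) : ℝ) + 1) * legIR (n + (M+1)) x
      * legIR (n + (M+1)) y) = ∑' n, T (n+(M+1)) := by
    exact congrArg tsum (hTN (M+1))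
  rw [htsum_eq]
  have hNpos : (0:ℝ) < ((M+1 : ℕ):ℝ) := by positivity
  have hrpow_nonneg : (0:ℝ) ≤ ((M+1 : ℕ):ℝ)^(α+1) := Real.rpow_nonneg hNpos.le _
  have habs : |(x - y) * ((M+1 : ℕ):ℝ)^(α+1) * ∑' n, T (n+(M+1))|
      = ((M+1 : ℕ):ℝ)^(α+1) * |(x-y) * ∑' n, T (n+(M+1))| := by
    rw [show (x - y) * ((M+1 : ℕ):ℝ)^(α+1) * (∑' n, T (n+(M+1)))
      = ((M+1 : ℕ):ℝ)^(α+1) * ((x-y) * ∑' n, T (n+(M+1))) by ring]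
    rw [abs_mul, abs_of_nonneg hrpow_nonneg]
  rw [Real.norm_eq_abs, habs]
  have hstep : ((M+1 : ℕ):ℝ)^(α+1) * |(x-y) * ∑' n, T (n+(M+1))|
      ≤ ((M+1 : ℕ):ℝ)^(α+1) * (24 * (1/((M:ℝ)+1)^2)) := by
    apply mul_le_mul_of_nonneg_left _ hrpow_nonneg
    calc |(x-y) * ∑' n, T (n+(M+1))| ≤ 24 * b (M+1) := tail_bound M
      _ ≤ 24 * (1/((M:ℝ)+1)^2) := by
          have := hb_le M
          linarith
  refine hstep.trans (le_of_eq ?_)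
  have hcast : ((M+1 : ℕ):ℝ) = (M:ℝ)+1 := by push_cast; ring
  rw [hcast]
  have hMpos : (0:ℝ) < (M:ℝ)+1 := by positivity
  rw [show ((M:ℝ)+1)^(α+1) * (24 * (1/((M:ℝ)+1)^2)) = 24 * (((M:ℝ)+1)^(α+1) / ((M:ℝ)+1)^(2:ℕ)) by
    ring]
  congr 1
  rw [← Real.rpow_natCast ((M:ℝ)+1) 2, ← Real.rpow_sub hMpos]
  congr 1
  push_cast
  ring
end
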